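/- arXiv:2409.02947 — 7 statements merged into one kernel-verified Lean document; each statement's English description precedes it below -/
import Mathlib

section
/- A connected simple graph G on n ≥ 2 vertices has metric dimension 1 if and only if G is isomorphic to the path graph P_n. -/
/-- `W` is a resolving set for `G`: distinct vertices have distinct
distance vectors to the elements of `W`. -/
def IsResolving {V : Type*} (G : SimpleGraph V) (W : Set V) : Prop :=
  ∀ u v : V, (∀ w ∈ W, G.dist u w = G.dist v w) → u = v

/-- The metric dimension of `G`: the minimum cardinality of a resolving set. -/
noncomputable def metricDim {V : Type*} [Fintype V] (G : SimpleGraph V) : ℕ :=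
  sInf {n | ∃ W : Finset V, IsResolving G (↑W) ∧ W.card = n}


/-!
If a single vertex `w` resolves `G`, then `v ↦ d(v, w)` is an injection of `V` into
`{0, …, |V| - 1}`, hence a bijection. Two vertices are adjacent exactly when their distances to
`w` differ by one: a vertex at distance `d + 1` has a neighbour at distance `d`, and by
injectivity that neighbour is the unique vertex at distance `d`. So the bijection is an
isomorphism onto the path. Conversely, an end vertex of the path resolves it, resolving sets
transfer along isomorphisms, and a graph with at least two vertices has no empty resolving set.
-/

namespace SimpleGraph

variable {V W : Type*} {G : SimpleGraph V} {H : SimpleGraph W}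

lemma edist_map_le (f : G →g H) (u v : V) : H.edist (f u) (f v) ≤ G.edist u v := by
  rw [edist_eq_sInf (G := G)]
  refine le_sInf ?_
  rintro _ ⟨p, rfl⟩
  simpa using H.edist_le (p.map f)

lemma Iso.edist_eq (e : G ≃g H) (u v : V) : H.edist (e u) (e v) = G.edist u v :=
  le_antisymm (edist_map_le e.toHom u v) (by simpa using edist_map_le e.symm.toHom (e u) (e v))

lemma Iso.dist_eq (e : G ≃g H) (u v : V) : H.dist (e u) (e v) = G.dist u v := by
  rw [dist, dist, e.edist_eq]

lemma dist_lt_card [Fintype V] (u v : V) : G.dist u v < Fintype.card V := by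
  by_cases huv : G.Reachable u v
  · obtain ⟨p, hp, hlen⟩ := huv.exists_path_of_dist
    exact hlen ▸ hp.length_lt
  · rw [dist_eq_zero_of_not_reachable huv]
    exact Fintype.card_pos_iff.mpr ⟨u⟩

lemma exists_adj_dist_eq_of_dist_eq_add_one {v w : V} {d : ℕ} (h : G.dist v w = d + 1) :
    ∃ u, G.Adj v u ∧ G.dist u w = d := by
  obtain ⟨p, hp⟩ := exists_walk_of_dist_ne_zero (by omega : G.dist v w ≠ 0)
  cases p with
  | nil => simp at h
  | @cons _ u _ hadj q =>
    rw [Walk.length_cons] at hp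
    refine ⟨u, hadj, le_antisymm ?_ ?_⟩
    · have := G.dist_le q
      omega
    · have := hadj.reachable.dist_triangle_left w
      rw [dist_eq_one_iff_adj.mpr hadj] at this
      omega

lemma adj_iff_of_injective_dist {w : V} (hw : Function.Injective (G.dist · w)) {u v : V} :
    G.Adj u v ↔ G.dist u w + 1 = G.dist v w ∨ G.dist v w + 1 = G.dist u w := by
  constructor
  · intro hadj
    have hne : G.dist u w ≠ G.dist v w := fun h ↦ hadj.ne (hw h)
    rcases hadj.diff_dist_adj (u := w) with h | h | h <;> rw [dist_comm, dist_comm (u := w)] at h <;>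
      omega
  · rintro (h | h)
    · obtain ⟨u', hadj, hu'⟩ := exists_adj_dist_eq_of_dist_eq_add_one h.symm
      exact hw hu' ▸ hadj.symm
    · obtain ⟨v', hadj, hv'⟩ := exists_adj_dist_eq_of_dist_eq_add_one h.symm
      exact hw hv' ▸ hadj

lemma sub_le_length_of_walk_pathGraph {n : ℕ} {i j : Fin n} (p : (pathGraph n).Walk i j) :
    (i : ℕ) - j ≤ p.length := by
  induction p with
  | nil => simp
  | cons hadj _ ih =>
    rw [pathGraph_adj] at hadj
    rw [Walk.length_cons]
    omega

lemma pathGraph_dist_of_le {n : ℕ} {i j : Fin n} (hji : j ≤ i) :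
    (pathGraph n).dist i j = i - j := by
  refine le_antisymm ?_ ?_
  · obtain ⟨i, hi⟩ := i
    induction i with
    | zero =>
      obtain rfl : j = ⟨0, hi⟩ := Fin.ext (Nat.le_zero.mp hji)
      simp
    | succ k ih =>
      rcases hji.eq_or_lt with rfl | hlt
      · simp
      have hk : k < n := by omega
      have hadj : (pathGraph n).Adj ⟨k + 1, hi⟩ ⟨k, hk⟩ := by simp [pathGraph_adj]
      have hjk : j ≤ ⟨k, hk⟩ := Fin.le_def.mpr (Nat.lt_succ_iff.mp hlt)
      calc (pathGraph n).dist ⟨k + 1, hi⟩ j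
          ≤ (pathGraph n).dist ⟨k + 1, hi⟩ ⟨k, hk⟩ + (pathGraph n).dist ⟨k, hk⟩ j :=
            hadj.reachable.dist_triangle_left j
        _ ≤ 1 + (k - j) := by
            rw [dist_eq_one_iff_adj.mpr hadj]
            exact Nat.add_le_add_left (ih hk hjk) 1
        _ = k + 1 - j := by have : (j : ℕ) ≤ k := hjk; omega
  · obtain ⟨p, hp⟩ := (pathGraph_preconnected n i j).exists_walk_length_eq_dist
    exact hp ▸ sub_le_length_of_walk_pathGraph p

noncomputable def isoPathGraphOfInjectiveDist [Fintype V] {w : V}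
    (hw : Function.Injective (G.dist · w)) : G ≃g pathGraph (Fintype.card V) where
  toEquiv := Equiv.ofBijective (fun v ↦ ⟨G.dist v w, dist_lt_card v w⟩)
    ((Fintype.bijective_iff_injective_and_card _).mpr
      ⟨fun _ _ h ↦ hw (congrArg Fin.val h), Fintype.card_fin _ |>.symm⟩)
  map_rel_iff' := by simp [pathGraph_adj, adj_iff_of_injective_dist hw]

end SimpleGraph

open SimpleGraph

section

variable {V V' : Type*} {G : SimpleGraph V} {H : SimpleGraph V'}

lemma isResolving_singleton_iff {w : V} : IsResolving G {w} ↔ Function.Injective (G.dist · w) := by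
  simp [IsResolving, Function.Injective]

lemma isResolving_pathGraph_singleton_zero {n : ℕ} (hn : 0 < n) :
    IsResolving (pathGraph n) {⟨0, hn⟩} :=
  isResolving_singleton_iff.mpr fun i j hij ↦ by
    have hdist (i : Fin n) : (pathGraph n).dist i ⟨0, hn⟩ = i :=
      pathGraph_dist_of_le (Nat.zero_le i.val)
    exact Fin.ext (by simpa only [hdist] using hij)

lemma IsResolving.image_iso {W : Set V} (hW : IsResolving G W) (e : G ≃g H) :
    IsResolving H (e '' W) := by
  intro u v huv
  refine e.symm.injective (hW _ _ fun w hw ↦ ?_)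
  rw [← e.dist_eq, ← e.dist_eq]
  simpa using huv (e w) ⟨w, hw, rfl⟩

lemma not_isResolving_empty [Nontrivial V] : ¬ IsResolving G ∅ := fun h ↦
  let ⟨u, v, huv⟩ := exists_pair_ne V
  huv (h u v (by simp))

lemma metricDim_eq_one_iff [Fintype V] [Nontrivial V] :
    metricDim G = 1 ↔ ∃ w, IsResolving G {w} := by
  unfold metricDim
  constructor
  · intro h
    obtain ⟨W, hW, hW1⟩ := h ▸ Nat.sInf_mem (Nat.nonempty_of_pos_sInf (h ▸ one_pos))
    obtain ⟨w, rfl⟩ := Finset.card_eq_one.mp hW1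
    exact ⟨w, by simpa using hW⟩
  · rintro ⟨w, hw⟩
    have hmem : 1 ∈ {n | ∃ W : Finset V, IsResolving G W ∧ W.card = n} :=
      ⟨{w}, by simpa using hw, Finset.card_singleton w⟩
    refine le_antisymm (Nat.sInf_le hmem) (le_csInf ⟨1, hmem⟩ ?_)
    rintro _ ⟨W, hW, rfl⟩
    refine Finset.card_pos.mpr (Finset.nonempty_iff_ne_empty.mpr ?_)
    rintro rfl
    exact not_isResolving_empty (by simpa using hW)

end

theorem metricDim_eq_one_iff_path_general {V : Type*} [Fintype V] (n : ℕ) (hn : 2 ≤ n)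
    (hcard : Fintype.card V = n) (G : SimpleGraph V) :
    metricDim G = 1 ↔ Nonempty (G ≃g SimpleGraph.pathGraph n) := by
  subst hcard
  have : Nontrivial V := Fintype.one_lt_card_iff_nontrivial.mp hn
  rw [metricDim_eq_one_iff]
  constructor
  · rintro ⟨w, hw⟩
    exact ⟨isoPathGraphOfInjectiveDist (isResolving_singleton_iff.mp hw)⟩
  · rintro ⟨e⟩
    refine ⟨e.symm ⟨0, by omega⟩, ?_⟩
    simpa using (isResolving_pathGraph_singleton_zero (by omega)).image_iso e.symm

theorem metricDim_eq_one_iff_path {V : Type*} [Fintype V] (n : ℕ) (hn : 2 ≤ n)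
    (hcard : Fintype.card V = n) (G : SimpleGraph V) (hG : G.Connected) :
    metricDim G = 1 ↔ Nonempty (G ≃g SimpleGraph.pathGraph n) :=
  metricDim_eq_one_iff_path_general n hn hcard G
end

section
/- A connected simple graph G on n ≥ 2 vertices has metric dimension n−1 if and only if G is the complete graph K_n. -/
/-! In `Kₙ` two vertices outside a set `W` are both at distance `1` from every vertex of `W`,
so a resolving set misses at most one vertex and `β(Kₙ) = n - 1`. A connected graph other than
`Kₙ` contains an induced path `x – a – b`; then `V ∖ {x, a}` is resolving, since `b` is at
distance `1` from `a` but not from `x`, so its metric dimension is at most `n - 2`. -/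

open SimpleGraph Finset

section resolving

variable {V : Type*} {G : SimpleGraph V} {W : Set V}

lemma eq_of_forall_dist_eq_of_mem (hG : G.Preconnected) {u v : V}
    (huv : ∀ w ∈ W, G.dist u w = G.dist v w) (hu : u ∈ W) : u = v := by
  have hvu : G.dist v u = 0 := by rw [← huv u hu, dist_self]
  exact ((hG v u).dist_eq_zero_iff.mp hvu).symm

lemma isResolving_of_forall_notMem (hG : G.Preconnected)
    (h : ∀ u ∉ W, ∀ v ∉ W, (∀ w ∈ W, G.dist u w = G.dist v w) → u = v) :
    IsResolving G W := by
  intro u v huv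
  by_cases hu : u ∈ W
  · exact eq_of_forall_dist_eq_of_mem hG huv hu
  by_cases hv : v ∈ W
  · exact (eq_of_forall_dist_eq_of_mem hG (fun w hw ↦ (huv w hw).symm) hv).symm
  exact h u hu v hv huv

lemma isResolving_of_compl_subset_pair (hG : G.Preconnected) {a b w : V} (hW : Wᶜ ⊆ {a, b})
    (hw : w ∈ W) (hab : G.dist a w ≠ G.dist b w) : IsResolving G W := by
  refine isResolving_of_forall_notMem hG fun u hu v hv huv ↦ ?_
  have hdist := huv w hw
  rcases hW hu with rfl | rfl <;> rcases hW hv with rfl | rfl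
  exacts [rfl, absurd hdist hab, absurd hdist.symm hab, rfl]

lemma isResolving_of_subsingleton_compl (hG : G.Preconnected) (hW : Wᶜ.Subsingleton) :
    IsResolving G W :=
  isResolving_of_forall_notMem hG fun _ hu _ hv _ ↦ hW hu hv

lemma isResolving_top_iff : IsResolving (⊤ : SimpleGraph V) W ↔ Wᶜ.Subsingleton := by
  refine ⟨fun hW u hu v hv ↦ hW u v fun w hw ↦ ?_,
    isResolving_of_subsingleton_compl preconnected_top⟩
  rw [dist_top_of_ne (ne_of_mem_of_not_mem hw hu).symm,
    dist_top_of_ne (ne_of_mem_of_not_mem hw hv).symm]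

lemma SimpleGraph.Preconnected.exists_induced_path_of_ne_top (hG : G.Preconnected) (h : G ≠ ⊤) :
    ∃ x a b : V, G.Adj x a ∧ G.Adj a b ∧ ¬ G.Adj x b ∧ x ≠ b := by
  obtain ⟨u, v, huv, hnadj⟩ := ne_top_iff_exists_not_adj.mp h
  obtain ⟨p, hp⟩ := (hG u v).exists_walk_length_eq_dist
  exact p.exists_adj_adj_not_adj_ne hp ((hG u v).one_lt_dist_of_ne_of_not_adj huv hnadj)

end resolving

section metricDim

variable {V : Type*} [Fintype V] {G : SimpleGraph V}

lemma metricDim_le_card {W : Finset V} (hW : IsResolving G W) : metricDim G ≤ #W :=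
  Nat.sInf_le ⟨W, hW, rfl⟩

lemma metricDim_top : metricDim (⊤ : SimpleGraph V) = Fintype.card V - 1 := by
  classical
  apply le_antisymm
  · obtain ⟨W, -, hW⟩ :=
      exists_subset_card_eq (s := (univ : Finset V)) (n := Fintype.card V - 1) (by simp)
    refine (metricDim_le_card (isResolving_top_iff.mpr ?_)).trans hW.le
    rw [← coe_compl, ← card_le_one_iff_subsingleton, card_compl, hW]
    omega
  · refine le_csInf ⟨_, univ, isResolving_top_iff.mpr (by simp), rfl⟩ ?_
    rintro _ ⟨W, hW, rfl⟩
    have hcompl := card_le_one_iff_subsingleton.mpr (coe_compl W ▸ isResolving_top_iff.mp hW)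
    rw [card_compl] at hcompl
    omega

lemma metricDim_le_card_sub_two_of_ne_top (hG : G.Preconnected) (h : G ≠ ⊤) :
    metricDim G ≤ Fintype.card V - 2 := by
  classical
  obtain ⟨x, a, b, hxa, hab, hxb, hne⟩ := hG.exists_induced_path_of_ne_top h
  have hb : b ∈ ({x, a}ᶜ : Finset V) := by simp [hne.symm, hab.ne.symm]
  have hdist : G.dist x b ≠ G.dist a b := by
    rwa [dist_eq_one_iff_adj.mpr hab, Ne, dist_eq_one_iff_adj]
  have hres : IsResolving G ↑({x, a}ᶜ : Finset V) :=
    isResolving_of_compl_subset_pair hG (by rw [coe_compl, compl_compl, coe_pair]) hb hdist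
  calc metricDim G ≤ #({x, a}ᶜ : Finset V) := metricDim_le_card hres
    _ = Fintype.card V - 2 := by rw [card_compl, card_pair hxa.ne]

end metricDim

theorem metricDim_eq_card_sub_one_iff_complete {V : Type*} [Fintype V] (n : ℕ) (hn : 2 ≤ n)
    (hcard : Fintype.card V = n) (G : SimpleGraph V) (hG : G.Connected) :
    metricDim G = n - 1 ↔ G = ⊤ := by
  subst hcard
  refine ⟨fun hdim ↦ ?_, fun htop ↦ htop ▸ metricDim_top⟩
  by_contra hne
  have hle := metricDim_le_card_sub_two_of_ne_top hG.preconnected hne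
  omega
end

section
/- In the theta graph Θ_{4,6,4} (paths of lengths 4, 6, 4 between u and v), no 2-element subset of the vertices is a resolving set; hence the metric dimension of Θ_{4,6,4} equals 3. -/
/-- The theta graph `Θ_{4,6,4}`: vertices `u = 0`, `u₁ u₂ u₃ = 1 2 3`, `v = 4`,
`v₁ … v₅ = 5 6 7 8 9`, `w₁ w₂ w₃ = 10 11 12`; three internally disjoint
`u`–`v` paths of lengths 4, 6, 4. -/
def theta464 : SimpleGraph (Fin 13) :=
  SimpleGraph.fromEdgeSet
    {s(0,1), s(1,2), s(2,3), s(3,4),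
     s(0,5), s(5,6), s(6,7), s(7,8), s(8,9), s(9,4),
     s(0,10), s(10,11), s(11,12), s(12,4)}

namespace SimpleGraph

variable {V : Type*} {G : SimpleGraph V} {d : V → V → ℕ}

theorem exists_walk_length_eq_of_exists_adj_closer
    (h_zero : ∀ a b, d a b = 0 ↔ a = b)
    (h_step : ∀ a b, a ≠ b → ∃ c, G.Adj a c ∧ d c b + 1 = d a b) :
    ∀ n a b, d a b = n → ∃ p : G.Walk a b, p.length = n := by
  intro n
  induction n with
  | zero =>
    rintro a b hab
    obtain rfl := (h_zero a b).mp hab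
    exact ⟨Walk.nil, rfl⟩
  | succ n ih =>
    rintro a b hab
    have hne : a ≠ b := fun h => by simp [(h_zero a b).mpr h] at hab
    obtain ⟨c, hac, hc⟩ := h_step a b hne
    obtain ⟨p, hp⟩ := ih c b (by omega)
    exact ⟨Walk.cons hac p, by simp [hp]⟩

theorem le_length_of_lipschitz (h_zero : ∀ a b, d a b = 0 ↔ a = b)
    (h_lip : ∀ a c b, G.Adj a c → d a b ≤ d c b + 1) {a b : V} (p : G.Walk a b) :
    d a b ≤ p.length := by
  induction p with
  | nil => exact ((h_zero _ _).mpr rfl).le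
  | cons hac p ih =>
    rw [Walk.length_cons]
    exact (h_lip _ _ _ hac).trans (by omega)

theorem dist_eq_of_lipschitz_of_exists_adj_closer
    (h_zero : ∀ a b, d a b = 0 ↔ a = b)
    (h_lip : ∀ a c b, G.Adj a c → d a b ≤ d c b + 1)
    (h_step : ∀ a b, a ≠ b → ∃ c, G.Adj a c ∧ d c b + 1 = d a b) (a b : V) :
    G.dist a b = d a b := by
  obtain ⟨p, hp⟩ := exists_walk_length_eq_of_exists_adj_closer h_zero h_step _ a b rfl
  obtain ⟨q, hq⟩ := Reachable.exists_walk_length_eq_dist ⟨p⟩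
  exact le_antisymm (hp ▸ dist_le p) (hq ▸ le_length_of_lipschitz h_zero h_lip q)

end SimpleGraph

section MetricDimension

variable {V : Type*} {G : SimpleGraph V}

theorem IsResolving.mono {W W' : Set V} (hWW' : W ⊆ W') (hW : IsResolving G W) :
    IsResolving G W' :=
  fun x y hxy => hW x y fun w hw => hxy w (hWW' hw)

variable [Fintype V]

theorem lt_card_of_isResolving {m : ℕ} (hm : m ≤ Fintype.card V)
    (h : ∀ W : Finset V, W.card = m → ¬ IsResolving G W) {W : Finset V}
    (hW : IsResolving G W) : m < W.card := by
  by_contra! hle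
  obtain ⟨W', hWW', hW'⟩ := Finset.exists_superset_card_eq hle (by simpa using hm)
  exact h W' hW' (hW.mono hWW')

theorem metricDim_eq_card {W : Finset V} (hW : IsResolving G W)
    (hmin : ∀ W' : Finset V, IsResolving G W' → W.card ≤ W'.card) :
    metricDim G = W.card :=
  le_antisymm (Nat.sInf_le ⟨W, hW, rfl⟩)
    (le_csInf ⟨_, W, hW, rfl⟩ (by rintro _ ⟨W', hW', rfl⟩; exact hmin W' hW'))

end MetricDimension

def theta464Dist : Fin 13 → Fin 13 → ℕ :=
  ![![0, 1, 2, 3, 4, 1, 2, 3, 4, 5, 1, 2, 3],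
    ![1, 0, 1, 2, 3, 2, 3, 4, 5, 4, 2, 3, 4],
    ![2, 1, 0, 1, 2, 3, 4, 5, 4, 3, 3, 4, 3],
    ![3, 2, 1, 0, 1, 4, 5, 4, 3, 2, 4, 3, 2],
    ![4, 3, 2, 1, 0, 5, 4, 3, 2, 1, 3, 2, 1],
    ![1, 2, 3, 4, 5, 0, 1, 2, 3, 4, 2, 3, 4],
    ![2, 3, 4, 5, 4, 1, 0, 1, 2, 3, 3, 4, 5],
    ![3, 4, 5, 4, 3, 2, 1, 0, 1, 2, 4, 5, 4],
    ![4, 5, 4, 3, 2, 3, 2, 1, 0, 1, 5, 4, 3],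
    ![5, 4, 3, 2, 1, 4, 3, 2, 1, 0, 4, 3, 2],
    ![1, 2, 3, 4, 3, 2, 3, 4, 5, 4, 0, 1, 2],
    ![2, 3, 4, 3, 2, 3, 4, 5, 4, 3, 1, 0, 1],
    ![3, 4, 3, 2, 1, 4, 5, 4, 3, 2, 2, 1, 0]]

theorem theta464_adj_iff (a b : Fin 13) : theta464.Adj a b ↔ theta464Dist a b = 1 := by
  simp only [theta464, SimpleGraph.fromEdgeSet_adj, Set.mem_insert_iff, Set.mem_singleton_iff,
    Sym2.eq, Sym2.rel_iff', Prod.mk.injEq, Prod.swap_prod_mk]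
  fin_cases a <;> fin_cases b <;> decide

theorem theta464_dist (a b : Fin 13) : theta464.dist a b = theta464Dist a b := by
  refine SimpleGraph.dist_eq_of_lipschitz_of_exists_adj_closer (by decide) ?_ ?_ a b
  · simp only [theta464_adj_iff]
    decide
  · simp only [theta464_adj_iff]
    decide

theorem theta464_exists_twins (a b : Fin 13) :
    ∃ x y : Fin 13, x ≠ y ∧ theta464.dist x a = theta464.dist y a ∧
      theta464.dist x b = theta464.dist y b := by
  simp only [theta464_dist]
  revert a b
  decide

theorem theta464_not_isResolving_of_card_eq_two (W : Finset (Fin 13)) (hW : W.card = 2) :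
    ¬ IsResolving theta464 W := by
  obtain ⟨a, b, -, rfl⟩ := Finset.card_eq_two.mp hW
  obtain ⟨x, y, hxy, hxya, hxyb⟩ := theta464_exists_twins a b
  refine fun hres => hxy (hres x y ?_)
  simp [hxya, hxyb]

theorem theta464_isResolving_zero_one_four :
    IsResolving theta464 ({0, 1, 4} : Finset (Fin 13)) := by
  intro x y hxy
  simp only [Finset.coe_insert, Finset.coe_singleton, Set.mem_insert_iff, Set.mem_singleton_iff,
    forall_eq_or_imp, forall_eq, theta464_dist] at hxy
  revert x y
  decide

/-- No 2-element vertex subset resolves `Θ_{4,6,4}`; hence its metric dimension is `3`. -/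
theorem theta464_metricDim :
    (∀ W : Finset (Fin 13), W.card = 2 → ¬ IsResolving theta464 (↑W))
    ∧ metricDim theta464 = 3 := by
  refine ⟨theta464_not_isResolving_of_card_eq_two, ?_⟩
  exact metricDim_eq_card theta464_isResolving_zero_one_four fun W hW =>
    lt_card_of_isResolving (by simp) theta464_not_isResolving_of_card_eq_two hW
end

section
/- Let C_{p,q,r} denote the base bicyclic graph of type III obtained from three disjoint paths on p, q, r internal vertices whose endpoints are identified appropriately (so that C_{p,q,r} ≅ Θ_{p+1,q−1,r+1}). If r = 0, p = 1, and q > 1, then the metric dimension of C_{1,q,0} equals 2, with resolving set {v_1, v_2}. -/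
/-- The type-III bicyclic graph `C_{p,q,0}` on vertices `v_1, …, v_{p+q}`
(vertex `v_i` is index `i-1`): two paths on `p` and `q` vertices, with edges
`v_{p+1}v_1`, `v_{p+q}v_p`, and the chord `v_{p+1}v_{p+q}` joining
the two endpoints of the middle path directly. -/
def bicyclicIIIZero (p q : ℕ) : SimpleGraph (Fin (p + q)) :=
  SimpleGraph.fromRel (fun a b =>
    (a.val + 1 = b.val ∧ (b.val < p ∨ p ≤ a.val))
    ∨ (a.val = p ∧ b.val = 0)
    ∨ (a.val = p + q - 1 ∧ b.val = p - 1)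
    ∨ (a.val = p ∧ b.val = p + q - 1))

lemma bz_adj_iff (q : ℕ) (hq : 1 < q) (a b : Fin (1 + q)) :
    (bicyclicIIIZero 1 q).Adj a b ↔ a.val ≠ b.val ∧
      (a.val + 1 = b.val ∨ b.val + 1 = a.val ∨ (a.val = 1 ∧ b.val = q) ∨
       (a.val = q ∧ b.val = 1) ∨ (a.val = 0 ∧ b.val = q) ∨ (a.val = q ∧ b.val = 0)) := by
  have ha := a.isLt
  have hb := b.isLt
  simp only [bicyclicIIIZero, SimpleGraph.fromRel_adj, ne_eq, Fin.ext_iff]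
  omega

/-- walk along consecutive vertices -/
lemma bz_walk_up (q : ℕ) (hq : 1 < q) :
    ∀ (d : ℕ) (a b : Fin (1 + q)), a.val + d = b.val →
      ∃ w : (bicyclicIIIZero 1 q).Walk a b, w.length = d := by
  intro d
  induction d with
  | zero =>
    intro a b h
    have : a = b := Fin.ext (by omega)
    subst this
    exact ⟨.nil, rfl⟩
  | succ d ih =>
    intro a b h
    have hb := b.isLt
    have hadj : (bicyclicIIIZero 1 q).Adj a ⟨a.val + 1, by omega⟩ := by
      rw [bz_adj_iff q hq]; simp only [Fin.val_mk, ne_eq]; exact ⟨by omega, Or.inl trivial⟩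
    obtain ⟨w, hw⟩ := ih ⟨a.val + 1, by omega⟩ b (by simp only [Fin.val_mk]; omega)
    exact ⟨.cons hadj w, by simp [hw]⟩

/-- lower bound machinery -/
lemma bz_le_length {V : Type*} {G : SimpleGraph V} (f : V → ℕ)
    (hf : ∀ a b, G.Adj a b → f a ≤ f b + 1) :
    ∀ {u v : V} (w : G.Walk u v), f u ≤ w.length + f v := by
  intro u v w
  induction w with
  | nil => simp
  | cons h p ih =>
    simp only [SimpleGraph.Walk.length_cons]
    have := hf _ _ h
    omega

lemma bz_dist0 (q : ℕ) (hq : 1 < q) (k : Fin (1 + q)) :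
    (bicyclicIIIZero 1 q).dist k ⟨0, Nat.lt_of_lt_of_le Nat.zero_lt_one (Nat.le_add_right 1 q)⟩ = min k.val (q + 1 - k.val) := by
  have hk := k.isLt
  rw [SimpleGraph.dist_comm]
  by_cases h0 : k.val = 0
  · rw [show k = (⟨0, by omega⟩ : Fin (1 + q)) from Fin.ext h0]
    simp [SimpleGraph.dist_self]
  · obtain ⟨w1, hw1⟩ := bz_walk_up q hq (k.val - 1) ⟨1, by omega⟩ k (by simp; omega)
    obtain ⟨w2, hw2⟩ := bz_walk_up q hq (q - k.val) k ⟨q, by omega⟩ (by simp; omega)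
    have adj01 : (bicyclicIIIZero 1 q).Adj ⟨0, by omega⟩ ⟨1, by omega⟩ := by
      rw [bz_adj_iff q hq]; simp
    have adj0q : (bicyclicIIIZero 1 q).Adj ⟨0, by omega⟩ ⟨q, by omega⟩ := by
      rw [bz_adj_iff q hq]; simp; omega
    have up1 := SimpleGraph.dist_le (SimpleGraph.Walk.cons adj01 w1)
    have up2 := SimpleGraph.dist_le (SimpleGraph.Walk.cons adj0q w2.reverse)
    simp only [SimpleGraph.Walk.length_cons, SimpleGraph.Walk.length_reverse, hw1, hw2] at up1 up2
    have hf : ∀ a b : Fin (1 + q), (bicyclicIIIZero 1 q).Adj a b →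
        (fun v : Fin (1 + q) => min v.val (q + 1 - v.val)) a ≤
        (fun v : Fin (1 + q) => min v.val (q + 1 - v.val)) b + 1 := by
      intro a b hab
      rw [bz_adj_iff q hq] at hab
      have := a.isLt; have := b.isLt
      simp only
      omega
    have hr : (bicyclicIIIZero 1 q).Reachable ⟨0, by omega⟩ k := ⟨.cons adj01 w1⟩
    obtain ⟨w, hw⟩ := hr.exists_walk_length_eq_dist
    have hlow := bz_le_length _ hf w.reverse
    simp only [SimpleGraph.Walk.length_reverse, hw] at hlow
    omega

lemma bz_dist1 (q : ℕ) (hq : 1 < q) (k : Fin (1 + q)) :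
    (bicyclicIIIZero 1 q).dist k ⟨1, Nat.lt_add_of_pos_right (Nat.zero_lt_of_lt hq)⟩ =
      (if k.val = 0 then 1 else min (k.val - 1) (q + 1 - k.val)) := by
  have hk := k.isLt
  rw [SimpleGraph.dist_comm]
  have adj01 : (bicyclicIIIZero 1 q).Adj ⟨1, by omega⟩ ⟨0, by omega⟩ := by
    rw [bz_adj_iff q hq]; simp
  have adj1q : (bicyclicIIIZero 1 q).Adj ⟨1, by omega⟩ ⟨q, by omega⟩ := by
    rw [bz_adj_iff q hq]; simp; omega
  by_cases h0 : k.val = 0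
  · rw [show k = (⟨0, by omega⟩ : Fin (1 + q)) from Fin.ext h0]
    rw [if_pos rfl, SimpleGraph.dist_eq_one_iff_adj]
    exact adj01
  · obtain ⟨w1, hw1⟩ := bz_walk_up q hq (k.val - 1) ⟨1, by omega⟩ k (by simp; omega)
    obtain ⟨w2, hw2⟩ := bz_walk_up q hq (q - k.val) k ⟨q, by omega⟩ (by simp; omega)
    have up1 := SimpleGraph.dist_le w1
    have up2 := SimpleGraph.dist_le (SimpleGraph.Walk.cons adj1q w2.reverse)
    simp only [SimpleGraph.Walk.length_cons, SimpleGraph.Walk.length_reverse, hw1, hw2] at up1 up2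
    have hf : ∀ a b : Fin (1 + q), (bicyclicIIIZero 1 q).Adj a b →
        (fun v : Fin (1 + q) => if v.val = 0 then 1 else min (v.val - 1) (q + 1 - v.val)) a ≤
        (fun v : Fin (1 + q) => if v.val = 0 then 1 else min (v.val - 1) (q + 1 - v.val)) b + 1 := by
      intro a b hab
      rw [bz_adj_iff q hq] at hab
      have := a.isLt; have := b.isLt
      simp only
      split_ifs <;> omega
    have hr : (bicyclicIIIZero 1 q).Reachable ⟨1, by omega⟩ k := ⟨w1⟩
    obtain ⟨w, hw⟩ := hr.exists_walk_length_eq_dist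
    have hlow := bz_le_length _ hf w.reverse
    simp only [SimpleGraph.Walk.length_reverse, hw, Fin.val_mk, if_neg h0,
      one_ne_zero, if_false] at hlow
    rw [if_neg h0]
    omega

theorem bicyclicIIIZero_one (q : ℕ) (hq : 1 < q) :
    IsResolving (bicyclicIIIZero 1 q)
      {(⟨0, by omega⟩ : Fin (1 + q)), ⟨1, by omega⟩}
    ∧ metricDim (bicyclicIIIZero 1 q) = 2 := by
  have hres : IsResolving (bicyclicIIIZero 1 q)
      {(⟨0, by omega⟩ : Fin (1 + q)), ⟨1, by omega⟩} := by
    intro u v h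
    have h0 := h ⟨0, by omega⟩ (Set.mem_insert _ _)
    have h1 := h ⟨1, by omega⟩ (Set.mem_insert_of_mem _ rfl)
    rw [bz_dist0 q hq u, bz_dist0 q hq v] at h0
    rw [bz_dist1 q hq u, bz_dist1 q hq v] at h1
    have hu := u.isLt
    have hv := v.isLt
    exact Fin.ext (by split_ifs at h1 <;> omega)
  refine ⟨hres, ?_⟩
  have h01 : (⟨0, by omega⟩ : Fin (1 + q)) ≠ ⟨1, by omega⟩ := by
    simp [Fin.ext_iff]
  have h2mem : 2 ∈ {n | ∃ W : Finset (Fin (1 + q)),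
      IsResolving (bicyclicIIIZero 1 q) (↑W) ∧ W.card = n} := by
    refine ⟨{⟨0, by omega⟩, ⟨1, by omega⟩}, ?_, Finset.card_pair h01⟩
    have hcoe : ((({⟨0, by omega⟩, ⟨1, by omega⟩} : Finset (Fin (1 + q))) : Set (Fin (1 + q))))
        = {(⟨0, by omega⟩ : Fin (1 + q)), ⟨1, by omega⟩} := by
      simp
    rw [hcoe]
    exact hres
  have hlb : ∀ n ∈ {n | ∃ W : Finset (Fin (1 + q)),
      IsResolving (bicyclicIIIZero 1 q) (↑W) ∧ W.card = n}, 2 ≤ n := by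
    rintro n ⟨W, hW, rfl⟩
    by_contra hle
    push_neg at hle
    interval_cases hc : W.card
    · -- card 0
      obtain rfl := Finset.card_eq_zero.mp hc
      exact h01 (hW _ _ (by simp))
    · -- card 1
      obtain ⟨w, rfl⟩ := Finset.card_eq_one.mp hc
      have hw := w.isLt
      obtain ⟨u, v, huv, hu, hv⟩ : ∃ u v : Fin (1 + q), u ≠ v ∧
          (bicyclicIIIZero 1 q).Adj u w ∧ (bicyclicIIIZero 1 q).Adj v w := by
        by_cases hw0 : w.val = 0
        · refine ⟨⟨1, by omega⟩, ⟨q, by omega⟩, ?_, ?_, ?_⟩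
          · simp only [ne_eq, Fin.ext_iff, Fin.val_mk]; omega
          · rw [bz_adj_iff q hq]; simp only [Fin.val_mk, ne_eq, eq_self_iff_true, and_true, true_and, or_true, true_or]; omega
          · rw [bz_adj_iff q hq]; simp only [Fin.val_mk, ne_eq, eq_self_iff_true, and_true, true_and, or_true, true_or]; omega
        · by_cases hwq : w.val = q
          · refine ⟨⟨0, by omega⟩, ⟨1, by omega⟩, h01, ?_, ?_⟩
            · rw [bz_adj_iff q hq]; simp only [Fin.val_mk, ne_eq, eq_self_iff_true, and_true, true_and, or_true, true_or]; omega
            · rw [bz_adj_iff q hq]; simp only [Fin.val_mk, ne_eq, eq_self_iff_true, and_true, true_and, or_true, true_or]; omega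
          · refine ⟨⟨w.val - 1, by omega⟩, ⟨w.val + 1, by omega⟩, ?_, ?_, ?_⟩
            · simp only [ne_eq, Fin.ext_iff, Fin.val_mk]; omega
            · rw [bz_adj_iff q hq]; simp only [Fin.val_mk, ne_eq, eq_self_iff_true, and_true, true_and, or_true, true_or]; omega
            · rw [bz_adj_iff q hq]; simp only [Fin.val_mk, ne_eq, eq_self_iff_true, and_true, true_and, or_true, true_or]; omega
      have hdu : (bicyclicIIIZero 1 q).dist u w = 1 :=
        SimpleGraph.dist_eq_one_iff_adj.mpr hu
      have hdv : (bicyclicIIIZero 1 q).dist v w = 1 :=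
        SimpleGraph.dist_eq_one_iff_adj.mpr hv
      refine huv (hW u v ?_)
      intro x hx
      simp only [Finset.coe_singleton, Set.mem_singleton_iff] at hx
      subst hx
      rw [hdu, hdv]
  have hne : Set.Nonempty {n | ∃ W : Finset (Fin (1 + q)),
      IsResolving (bicyclicIIIZero 1 q) (↑W) ∧ W.card = n} := ⟨2, h2mem⟩
  exact le_antisymm (Nat.sInf_le h2mem) (hlb _ (Nat.sInf_mem hne))
end

section
/- Let C_{p,q,r} be the type-III bicyclic graph with r = 0 and p > 1 (q > 1). Then the set W = {v_1, v_{⌊p/2⌋+1}} is a resolving set, and β(C_{p,q,0}) = 2. -/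
namespace BicyclicAux

/-- distance-to-`v 0` formula -/
def g0 (p q u : ℕ) : ℕ :=
  if u < p then min u (p + 2 - u) else min (u - p + 1) (q + 1 - (u - p))

/-- distance-to-`v (p/2)` formula -/
def gh (p q u : ℕ) : ℕ :=
  if u < p then max (p / 2 - u) (u - p / 2)
  else min (u - p + p / 2 + 1) (p - p / 2 + q - 1 - (u - p))

lemma adj_iff (p q : ℕ) (a b : Fin (p + q)) :
    (bicyclicIIIZero p q).Adj a b ↔ ¬ a.val = b.val ∧
      ((a.val + 1 = b.val ∧ (b.val < p ∨ p ≤ a.val))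
        ∨ (a.val = p ∧ b.val = 0)
        ∨ (a.val = p + q - 1 ∧ b.val = p - 1)
        ∨ (a.val = p ∧ b.val = p + q - 1)
        ∨ (b.val + 1 = a.val ∧ (a.val < p ∨ p ≤ b.val))
        ∨ (b.val = p ∧ a.val = 0)
        ∨ (b.val = p + q - 1 ∧ a.val = p - 1)
        ∨ (b.val = p ∧ a.val = p + q - 1)) := by
  rw [bicyclicIIIZero, SimpleGraph.fromRel_adj]
  simp only [ne_eq, Fin.ext_iff, or_assoc]

lemma low_aux {V : Type*} (G : SimpleGraph V) (w : V) (f : V → ℕ)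
    (h0 : f w = 0) (hlip : ∀ a b, G.Adj a b → f a ≤ f b + 1) :
    ∀ (x : V) (W : G.Walk x w), f x ≤ W.length := by
  intro x W
  induction W with
  | nil => simp [h0]
  | @cons a b c hadj W ih =>
    have h2 := hlip _ _ hadj
    have h3 := ih h0
    simp only [SimpleGraph.Walk.length_cons]
    omega

/-- distance equals a potential function -/
lemma dist_eq_potential {V : Type*} (G : SimpleGraph V) (w : V) (f : V → ℕ)
    (h0 : f w = 0) (h0' : ∀ u, f u = 0 → u = w)
    (hlip : ∀ a b, G.Adj a b → f a ≤ f b + 1)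
    (hdesc : ∀ u, f u ≠ 0 → ∃ v, G.Adj u v ∧ f v + 1 = f u) (u : V) :
    G.dist u w = f u := by
  have low := low_aux G w f h0 hlip
  have key : ∀ (k : ℕ) (x : V), f x ≤ k → ∃ W : G.Walk x w, W.length = f x := by
    intro k
    induction k with
    | zero =>
      intro x hx
      have hx0 : f x = 0 := Nat.le_zero.mp hx
      obtain rfl := h0' x hx0
      exact ⟨SimpleGraph.Walk.nil, by simpa using hx0.symm⟩
    | succ k ih =>
      intro x hx
      by_cases hx0 : f x = 0
      · obtain rfl := h0' x hx0
        exact ⟨SimpleGraph.Walk.nil, by simpa using hx0.symm⟩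
      · obtain ⟨v, hadj, hv⟩ := hdesc x hx0
        obtain ⟨W, hW⟩ := ih v (by omega)
        refine ⟨SimpleGraph.Walk.cons hadj W, ?_⟩
        simp only [SimpleGraph.Walk.length_cons, hW]
        omega
  obtain ⟨W, hW⟩ := key (f u) u le_rfl
  refine le_antisymm (hW ▸ SimpleGraph.dist_le W) ?_
  have hr : G.Reachable u w := ⟨W⟩
  obtain ⟨P, hP⟩ := hr.exists_walk_length_eq_dist
  rw [← hP]
  exact low u P

variable {p q : ℕ}

lemma dist0 (hp : 1 < p) (hq : 1 < q) (u : Fin (p + q)) :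
    (bicyclicIIIZero p q).dist u ⟨0, by clear hq; omega⟩ = g0 p q u.val := by
  apply dist_eq_potential
  · show g0 p q (0 : ℕ) = 0
    simp only [g0]; split_ifs <;> omega
  · intro x hx
    have hxlt := x.isLt
    have : x.val = 0 := by
      simp only [g0] at hx; split_ifs at hx <;> omega
    exact Fin.ext this
  · intro a b hab
    rw [adj_iff] at hab
    have ha := a.isLt; have hb := b.isLt
    simp only [g0]; split_ifs <;> omega
  · intro u hu
    have hlt := u.isLt
    simp only [g0] at hu
    split_ifs at hu with h1
    · by_cases h2 : 2 * u.val ≤ p + 2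
      · refine ⟨⟨u.val - 1, by omega⟩, ?_, ?_⟩ <;>
          have hv : (⟨u.val - 1, by omega⟩ : Fin (p + q)).val = u.val - 1 := rfl
        · rw [adj_iff]
          exact ⟨by omega, by right; right; right; right; left; omega⟩
        · simp only [g0, hv]; split_ifs <;> omega
      · by_cases h3 : u.val + 1 < p
        · refine ⟨⟨u.val + 1, by omega⟩, ?_, ?_⟩ <;>
            have hv : (⟨u.val + 1, by omega⟩ : Fin (p + q)).val = u.val + 1 := rfl
          · rw [adj_iff]
            exact ⟨by omega, by left; omega⟩
          · simp only [g0, hv]; split_ifs <;> omega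
        · refine ⟨⟨p + q - 1, by omega⟩, ?_, ?_⟩ <;>
            have hv : (⟨p + q - 1, by omega⟩ : Fin (p + q)).val = p + q - 1 := rfl
          · rw [adj_iff]
            exact ⟨by omega, by right; right; right; right; right; right; left; omega⟩
          · simp only [g0, hv]; split_ifs <;> omega
    · by_cases h2 : u.val = p
      · refine ⟨⟨0, by omega⟩, ?_, ?_⟩ <;>
          have hv : (⟨0, by omega⟩ : Fin (p + q)).val = 0 := rfl
        · rw [adj_iff]
          exact ⟨by omega, by right; left; omega⟩
        · simp only [g0, hv]; split_ifs <;> omega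
      · by_cases h3 : u.val - p + 1 ≤ q + 1 - (u.val - p)
        · refine ⟨⟨u.val - 1, by omega⟩, ?_, ?_⟩ <;>
            have hv : (⟨u.val - 1, by omega⟩ : Fin (p + q)).val = u.val - 1 := rfl
          · rw [adj_iff]
            exact ⟨by omega, by right; right; right; right; left; omega⟩
          · simp only [g0, hv]; split_ifs <;> omega
        · by_cases h4 : u.val + 1 < p + q
          · refine ⟨⟨u.val + 1, by omega⟩, ?_, ?_⟩ <;>
              have hv : (⟨u.val + 1, by omega⟩ : Fin (p + q)).val = u.val + 1 := rfl
            · rw [adj_iff]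
              exact ⟨by omega, by left; omega⟩
            · simp only [g0, hv]; split_ifs <;> omega
          · refine ⟨⟨p, by omega⟩, ?_, ?_⟩ <;>
              have hv : (⟨p, by omega⟩ : Fin (p + q)).val = p := rfl
            · rw [adj_iff]
              exact ⟨by omega, by right; right; right; right; right; right; right; omega⟩
            · simp only [g0, hv]; split_ifs <;> omega

lemma disth (hp : 1 < p) (hq : 1 < q) (u : Fin (p + q)) :
    (bicyclicIIIZero p q).dist u ⟨p / 2, by clear hq; omega⟩ = gh p q u.val := by
  apply dist_eq_potential
  · show gh p q (p / 2) = 0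
    simp only [gh]; split_ifs <;> omega
  · intro x hx
    have hxlt := x.isLt
    have : x.val = p / 2 := by
      simp only [gh] at hx; split_ifs at hx <;> omega
    exact Fin.ext this
  · intro a b hab
    rw [adj_iff] at hab
    have ha := a.isLt; have hb := b.isLt
    simp only [gh]; split_ifs <;> omega
  · intro u hu
    have hlt := u.isLt
    simp only [gh] at hu
    split_ifs at hu with h1
    · by_cases h2 : u.val < p / 2
      · refine ⟨⟨u.val + 1, by omega⟩, ?_, ?_⟩ <;>
          have hv : (⟨u.val + 1, by omega⟩ : Fin (p + q)).val = u.val + 1 := rfl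
        · rw [adj_iff]
          exact ⟨by omega, by left; omega⟩
        · simp only [gh, hv]; split_ifs <;> omega
      · refine ⟨⟨u.val - 1, by omega⟩, ?_, ?_⟩ <;>
          have hv : (⟨u.val - 1, by omega⟩ : Fin (p + q)).val = u.val - 1 := rfl
        · rw [adj_iff]
          exact ⟨by omega, by right; right; right; right; left; omega⟩
        · simp only [gh, hv]; split_ifs <;> omega
    · by_cases h2 : u.val = p
      · refine ⟨⟨0, by omega⟩, ?_, ?_⟩ <;>
          have hv : (⟨0, by omega⟩ : Fin (p + q)).val = 0 := rfl
        · rw [adj_iff]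
          exact ⟨by omega, by right; left; omega⟩
        · simp only [gh, hv]; split_ifs <;> omega
      · by_cases h3 : u.val - p + p / 2 + 1 ≤ p - p / 2 + q - 1 - (u.val - p)
        · refine ⟨⟨u.val - 1, by omega⟩, ?_, ?_⟩ <;>
            have hv : (⟨u.val - 1, by omega⟩ : Fin (p + q)).val = u.val - 1 := rfl
          · rw [adj_iff]
            exact ⟨by omega, by right; right; right; right; left; omega⟩
          · simp only [gh, hv]; split_ifs <;> omega
        · by_cases h4 : u.val + 1 < p + q
          · refine ⟨⟨u.val + 1, by omega⟩, ?_, ?_⟩ <;>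
              have hv : (⟨u.val + 1, by omega⟩ : Fin (p + q)).val = u.val + 1 := rfl
            · rw [adj_iff]
              exact ⟨by omega, by left; omega⟩
            · simp only [gh, hv]; split_ifs <;> omega
          · refine ⟨⟨p - 1, by omega⟩, ?_, ?_⟩ <;>
              have hv : (⟨p - 1, by omega⟩ : Fin (p + q)).val = p - 1 := rfl
            · rw [adj_iff]
              exact ⟨by omega, by right; right; left; omega⟩
            · simp only [gh, hv]; split_ifs <;> omega

lemma resolving (hp : 1 < p) (hq : 1 < q) :
    IsResolving (bicyclicIIIZero p q)
      {(⟨0, by clear hq; omega⟩ : Fin (p + q)), ⟨p / 2, by clear hq; omega⟩} := by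
  intro u v h
  have h0 := h ⟨0, by omega⟩ (by simp)
  have hh := h ⟨p / 2, by omega⟩ (by simp)
  rw [dist0 hp hq u, dist0 hp hq v] at h0
  rw [disth hp hq u, disth hp hq v] at hh
  have hu := u.isLt; have hv := v.isLt
  apply Fin.ext
  simp only [g0, gh] at h0 hh
  split_ifs at h0 hh <;> omega

lemma two_neighbors (hp : 1 < p) (hq : 1 < q) (w : Fin (p + q)) :
    ∃ x y : Fin (p + q), x ≠ y ∧ (bicyclicIIIZero p q).Adj w x ∧
      (bicyclicIIIZero p q).Adj w y := by
  have hw := w.isLt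
  by_cases h0 : w.val = 0
  · refine ⟨⟨1, by omega⟩, ⟨p, by omega⟩, ?_, ?_, ?_⟩
    · simp only [ne_eq, Fin.mk.injEq]; omega
    · have hv : (⟨1, by omega⟩ : Fin (p + q)).val = 1 := rfl
      rw [adj_iff]
      exact ⟨by omega, by left; omega⟩
    · have hv : (⟨p, by omega⟩ : Fin (p + q)).val = p := rfl
      rw [adj_iff]
      exact ⟨by omega, by right; right; right; right; right; left; omega⟩
  by_cases h1 : w.val = p
  · refine ⟨⟨0, by omega⟩, ⟨p + q - 1, by omega⟩, ?_, ?_, ?_⟩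
    · simp only [ne_eq, Fin.mk.injEq]; omega
    · have hv : (⟨0, by omega⟩ : Fin (p + q)).val = 0 := rfl
      rw [adj_iff]
      exact ⟨by omega, by right; left; omega⟩
    · have hv : (⟨p + q - 1, by omega⟩ : Fin (p + q)).val = p + q - 1 := rfl
      rw [adj_iff]
      exact ⟨by omega, by right; right; right; left; omega⟩
  by_cases h2 : w.val = p - 1
  · refine ⟨⟨p - 2, by omega⟩, ⟨p + q - 1, by omega⟩, ?_, ?_, ?_⟩
    · simp only [ne_eq, Fin.mk.injEq]; omega
    · have hv : (⟨p - 2, by omega⟩ : Fin (p + q)).val = p - 2 := rfl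
      rw [adj_iff]
      exact ⟨by omega, by right; right; right; right; left; omega⟩
    · have hv : (⟨p + q - 1, by omega⟩ : Fin (p + q)).val = p + q - 1 := rfl
      rw [adj_iff]
      exact ⟨by omega, by right; right; right; right; right; right; left; omega⟩
  by_cases h3 : w.val = p + q - 1
  · refine ⟨⟨p + q - 2, by omega⟩, ⟨p - 1, by omega⟩, ?_, ?_, ?_⟩
    · simp only [ne_eq, Fin.mk.injEq]; omega
    · have hv : (⟨p + q - 2, by omega⟩ : Fin (p + q)).val = p + q - 2 := rfl
      rw [adj_iff]
      exact ⟨by omega, by right; right; right; right; left; omega⟩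
    · have hv : (⟨p - 1, by omega⟩ : Fin (p + q)).val = p - 1 := rfl
      rw [adj_iff]
      exact ⟨by omega, by right; right; left; omega⟩
  · refine ⟨⟨w.val - 1, by omega⟩, ⟨w.val + 1, by omega⟩, ?_, ?_, ?_⟩
    · simp only [ne_eq, Fin.mk.injEq]; omega
    · have hv : (⟨w.val - 1, by omega⟩ : Fin (p + q)).val = w.val - 1 := rfl
      rw [adj_iff]
      exact ⟨by omega, by right; right; right; right; left; omega⟩
    · have hv : (⟨w.val + 1, by omega⟩ : Fin (p + q)).val = w.val + 1 := rfl
      rw [adj_iff]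
      exact ⟨by omega, by left; omega⟩

end BicyclicAux

theorem bicyclicIIIZero_metricDim (p q : ℕ) (hp : 1 < p) (hq : 1 < q) :
    IsResolving (bicyclicIIIZero p q)
      {(⟨0, by omega⟩ : Fin (p + q)), ⟨p / 2, by omega⟩}
    ∧ metricDim (bicyclicIIIZero p q) = 2 := by
  have hres := BicyclicAux.resolving hp hq
  refine ⟨hres, ?_⟩
  have hne : (⟨0, by omega⟩ : Fin (p + q)) ≠ ⟨p / 2, by omega⟩ := by
    simp only [ne_eq, Fin.mk.injEq]; omega
  have hmem : 2 ∈ {n | ∃ W : Finset (Fin (p + q)),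
      IsResolving (bicyclicIIIZero p q) (↑W) ∧ W.card = n} := by
    refine ⟨{⟨0, by omega⟩, ⟨p / 2, by omega⟩}, ?_, ?_⟩
    · simpa using hres
    · rw [Finset.card_insert_of_notMem (by simpa using hne), Finset.card_singleton]
  rw [metricDim]
  refine le_antisymm (Nat.sInf_le hmem) ?_
  refine le_csInf ⟨2, hmem⟩ ?_
  rintro m ⟨W, hW, rfl⟩
  by_contra hlt
  push_neg at hlt
  obtain hc | hc : W.card = 0 ∨ W.card = 1 := by omega
  · rw [Finset.card_eq_zero] at hc
    subst hc
    have := hW ⟨0, by omega⟩ ⟨1, by omega⟩ (by simp)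
    simp only [Fin.mk.injEq] at this
    omega
  · rw [Finset.card_eq_one] at hc
    obtain ⟨w, rfl⟩ := hc
    obtain ⟨x, y, hxy, hx, hy⟩ := BicyclicAux.two_neighbors hp hq w
    apply hxy
    apply hW
    intro z hz
    simp only [Finset.coe_singleton, Set.mem_singleton_iff] at hz
    subst hz
    rw [SimpleGraph.dist_comm, SimpleGraph.dist_eq_one_iff_adj.mpr hx,
      SimpleGraph.dist_comm (u := y), SimpleGraph.dist_eq_one_iff_adj.mpr hy]
end

section
/- Let C_{p,q,r} be the type-III bicyclic graph with p = q and q − r = 2. Then β(C_{p,q,r}) = 3, and {v_1, v_2, v_{p+2}} is a minimum resolving set. -/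
/-- The type-III base bicyclic graph `C_{p,q,r}` on vertices `v_1, …, v_{p+q+r}`
(vertex `v_i` is index `i-1`): three paths on `p`, `q`, `r` vertices, with the
extra edges `v_{p+1}v_1`, `v_{p+1}v_{p+q+1}`, `v_{p+q}v_p`, `v_{p+q}v_{p+q+r}`.
Note `C_{p,q,r} ≅ Θ_{p+1,q-1,r+1}`. -/
def bicyclicIII (p q r : ℕ) : SimpleGraph (Fin (p + q + r)) :=
  SimpleGraph.fromRel (fun a b =>
    (a.val + 1 = b.val ∧ (b.val < p ∨ (p ≤ a.val ∧ b.val < p + q) ∨ p + q ≤ a.val))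
    ∨ (a.val = p ∧ b.val = 0)
    ∨ (a.val = p ∧ b.val = p + q)
    ∨ (a.val = p + q - 1 ∧ b.val = p - 1)
    ∨ (a.val = p + q - 1 ∧ b.val = p + q + r - 1))

namespace Bic

abbrev N (r : ℕ) : ℕ := r + 2 + (r + 2) + r
abbrev G (r : ℕ) : SimpleGraph (Fin (N r)) := bicyclicIII (r+2) (r+2) r

lemma NN (r : ℕ) {e : ℕ} (h : e < r+2+(r+2)+r) : e < N r := h

def S (r i : ℕ) : ℕ := if i < r+2 then i+1 else if i < 2*r+4 then i - (r+2) else i - (2*r+3)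
def T (r i : ℕ) : ℕ := if i < r+2 then r+2-i else if i < 2*r+4 then 2*r+3-i else 3*r+4-i
def br (r i : ℕ) : ℕ := if i < r+2 then 0 else if i < 2*r+4 then 1 else 2
def f (r i j : ℕ) : ℕ :=
  if br r i = br r j then max (S r i) (S r j) - min (S r i) (S r j)
  else min (S r i + S r j) (T r i + T r j)

lemma fAA {r i j : ℕ} (h1 : i < r+2) (h2 : j < r+2) :
    f r i j = max (i+1) (j+1) - min (i+1) (j+1) := by
  simp only [f, S, T, br]; split_ifs <;> first | exact ‹False›.elim | omega
lemma fAB {r i j : ℕ} (h1 : i < r+2) (h2 : r+2 ≤ j) (h3 : j < 2*r+4) :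
    f r i j = min ((i+1)+(j-(r+2))) ((r+2-i)+(2*r+3-j)) := by
  simp only [f, S, T, br]; split_ifs <;> first | exact ‹False›.elim | omega
lemma fAC {r i j : ℕ} (h1 : i < r+2) (h2 : 2*r+4 ≤ j) :
    f r i j = min ((i+1)+(j-(2*r+3))) ((r+2-i)+(3*r+4-j)) := by
  simp only [f, S, T, br]; split_ifs <;> first | exact ‹False›.elim | omega
lemma fBA {r i j : ℕ} (h1 : r+2 ≤ i) (h2 : i < 2*r+4) (h3 : j < r+2) :
    f r i j = min ((i-(r+2))+(j+1)) ((2*r+3-i)+(r+2-j)) := by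
  simp only [f, S, T, br]; split_ifs <;> first | exact ‹False›.elim | omega
lemma fBB {r i j : ℕ} (h1 : r+2 ≤ i) (h2 : i < 2*r+4) (h3 : r+2 ≤ j) (h4 : j < 2*r+4) :
    f r i j = max (i-(r+2)) (j-(r+2)) - min (i-(r+2)) (j-(r+2)) := by
  simp only [f, S, T, br]; split_ifs <;> first | exact ‹False›.elim | omega
lemma fBC {r i j : ℕ} (h1 : r+2 ≤ i) (h2 : i < 2*r+4) (h3 : 2*r+4 ≤ j) :
    f r i j = min ((i-(r+2))+(j-(2*r+3))) ((2*r+3-i)+(3*r+4-j)) := by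
  simp only [f, S, T, br]; split_ifs <;> first | exact ‹False›.elim | omega
lemma fCA {r i j : ℕ} (h1 : 2*r+4 ≤ i) (h2 : j < r+2) :
    f r i j = min ((i-(2*r+3))+(j+1)) ((3*r+4-i)+(r+2-j)) := by
  simp only [f, S, T, br]; split_ifs <;> first | exact ‹False›.elim | omega
lemma fCB {r i j : ℕ} (h1 : 2*r+4 ≤ i) (h2 : r+2 ≤ j) (h3 : j < 2*r+4) :
    f r i j = min ((i-(2*r+3))+(j-(r+2))) ((3*r+4-i)+(2*r+3-j)) := by
  simp only [f, S, T, br]; split_ifs <;> first | exact ‹False›.elim | omega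
lemma fCC {r i j : ℕ} (h1 : 2*r+4 ≤ i) (h2 : 2*r+4 ≤ j) :
    f r i j = max (i-(2*r+3)) (j-(2*r+3)) - min (i-(2*r+3)) (j-(2*r+3)) := by
  simp only [f, S, T, br]; split_ifs <;> first | exact ‹False›.elim | omega

lemma f_self (r i : ℕ) : f r i i = 0 := by
  unfold f; rw [if_pos rfl]; omega

lemma S_A {r i : ℕ} (h : i < r+2) : S r i = i+1 := by unfold S; split_ifs <;> first | exact ‹False›.elim | omega
lemma S_B {r i : ℕ} (h1 : r+2 ≤ i) (h2 : i < 2*r+4) : S r i = i - (r+2) := by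
  unfold S; split_ifs <;> first | exact ‹False›.elim | omega
lemma S_C {r i : ℕ} (h : 2*r+4 ≤ i) : S r i = i - (2*r+3) := by unfold S; split_ifs <;> first | exact ‹False›.elim | omega
lemma T_A {r i : ℕ} (h : i < r+2) : T r i = r+2-i := by unfold T; split_ifs <;> first | exact ‹False›.elim | omega
lemma T_B {r i : ℕ} (h1 : r+2 ≤ i) (h2 : i < 2*r+4) : T r i = 2*r+3-i := by
  unfold T; split_ifs <;> first | exact ‹False›.elim | omega
lemma T_C {r i : ℕ} (h : 2*r+4 ≤ i) : T r i = 3*r+4-i := by unfold T; split_ifs <;> first | exact ‹False›.elim | omega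

lemma lip_core {r a b x : ℕ} (hr : 1 ≤ r) (ha : a < 3*r+4) (hb : b < 3*r+4) (hxb : x < 3*r+4)
    (h : (a + 1 = b ∧ (b < r+2 ∨ (r+2 ≤ a ∧ b < r+2+(r+2)) ∨ r+2+(r+2) ≤ a))
      ∨ (a = r+2 ∧ b = 0) ∨ (a = r+2 ∧ b = r+2+(r+2))
      ∨ (a = r+2+(r+2)-1 ∧ b = r+2-1) ∨ (a = r+2+(r+2)-1 ∧ b = r+2+(r+2)+r-1)) :
    f r a x ≤ f r b x + 1 ∧ f r b x ≤ f r a x + 1 := by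
  have hx : x < r+2 ∨ (r+2 ≤ x ∧ x < 2*r+4) ∨ 2*r+4 ≤ x := by omega
  rcases h with ⟨hab, hc | ⟨hc1, hc2⟩ | hc⟩ | ⟨ha, hb⟩ | ⟨ha, hb⟩ | ⟨ha, hb⟩ | ⟨ha, hb⟩
  -- chain in A
  · subst hab
    rcases hx with h1 | ⟨h1, h2⟩ | h1
    · rw [fAA (i:=a) (by omega) h1, fAA (i:=a+1) (by omega) h1]; omega
    · rw [fAB (i:=a) (by omega) h1 h2, fAB (i:=a+1) (by omega) h1 h2]; omega
    · rw [fAC (i:=a) (by omega) h1, fAC (i:=a+1) (by omega) h1]; omega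
  -- chain in B
  · subst hab
    rcases hx with h1 | ⟨h1, h2⟩ | h1
    · rw [fBA (i:=a) (by omega) (by omega) h1, fBA (i:=a+1) (by omega) (by omega) h1]; omega
    · rw [fBB (i:=a) (by omega) (by omega) h1 h2, fBB (i:=a+1) (by omega) (by omega) h1 h2]; omega
    · rw [fBC (i:=a) (by omega) (by omega) h1, fBC (i:=a+1) (by omega) (by omega) h1]; omega
  -- chain in C
  · subst hab
    rcases hx with h1 | ⟨h1, h2⟩ | h1
    · rw [fCA (i:=a) (by omega) h1, fCA (i:=a+1) (by omega) h1]; omega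
    · rw [fCB (i:=a) (by omega) h1 h2, fCB (i:=a+1) (by omega) h1 h2]; omega
    · rw [fCC (i:=a) (by omega) h1, fCC (i:=a+1) (by omega) h1]; omega
  -- u -- v0
  · subst ha; subst hb
    rcases hx with h1 | ⟨h1, h2⟩ | h1
    · rw [fBA (by omega) (by omega) h1, fAA (by omega) h1]; omega
    · rw [fBB (by omega) (by omega) h1 h2, fAB (by omega) h1 h2]; omega
    · rw [fBC (by omega) (by omega) h1, fAC (by omega) h1]; omega
  -- u -- c0
  · subst ha; subst hb
    rcases hx with h1 | ⟨h1, h2⟩ | h1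
    · rw [fBA (by omega) (by omega) h1, fCA (by omega) h1]; omega
    · rw [fBB (by omega) (by omega) h1 h2, fCB (by omega) h1 h2]; omega
    · rw [fBC (by omega) (by omega) h1, fCC (by omega) h1]; omega
  -- w -- a_last
  · subst ha; subst hb
    rcases hx with h1 | ⟨h1, h2⟩ | h1
    · rw [fBA (by omega) (by omega) h1, fAA (by omega) h1]; omega
    · rw [fBB (by omega) (by omega) h1 h2, fAB (by omega) h1 h2]; omega
    · rw [fBC (by omega) (by omega) h1, fAC (by omega) h1]; omega
  -- w -- c_last
  · subst ha; subst hb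
    rcases hx with h1 | ⟨h1, h2⟩ | h1
    · rw [fBA (by omega) (by omega) h1, fCA (by omega) h1]; omega
    · rw [fBB (by omega) (by omega) h1 h2, fCB (by omega) h1 h2]; omega
    · rw [fBC (by omega) (by omega) h1, fCC (by omega) h1]; omega
lemma adj_chain {r i : ℕ} (hi : i + 1 < r+2+(r+2)+r)
    (hc : i+1 < r+2 ∨ (r+2 ≤ i ∧ i+1 < 2*r+4) ∨ 2*r+4 ≤ i) :
    (G r).Adj ⟨i, NN r (by omega)⟩ ⟨i+1, NN r hi⟩ := by
  unfold G bicyclicIII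
  rw [SimpleGraph.fromRel_adj]
  exact ⟨by simp only [ne_eq, Fin.mk.injEq]; omega, Or.inl (Or.inl ⟨rfl, show i+1 < r+2 ∨ (r+2 ≤ i ∧ i+1 < r+2+(r+2)) ∨ r+2+(r+2) ≤ i by omega⟩)⟩

lemma adj_u0 {r : ℕ} : (G r).Adj ⟨r+2, NN r (by omega)⟩ ⟨0, NN r (by omega)⟩ := by
  unfold G bicyclicIII
  rw [SimpleGraph.fromRel_adj]
  exact ⟨by simp only [ne_eq, Fin.mk.injEq]; omega, Or.inl (Or.inr (Or.inl ⟨rfl, rfl⟩))⟩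

lemma adj_uc {r : ℕ} (hr : 1 ≤ r) :
    (G r).Adj ⟨r+2, NN r (by omega)⟩ ⟨2*r+4, NN r (by omega)⟩ := by
  unfold G bicyclicIII
  rw [SimpleGraph.fromRel_adj]
  refine ⟨by simp only [ne_eq, Fin.mk.injEq]; omega, Or.inl (Or.inr (Or.inr (Or.inl ⟨rfl, ?_⟩)))⟩
  show 2*r+4 = r+2+(r+2); omega

lemma adj_wa {r : ℕ} : (G r).Adj ⟨2*r+3, NN r (by omega)⟩ ⟨r+1, NN r (by omega)⟩ := by
  unfold G bicyclicIII
  rw [SimpleGraph.fromRel_adj]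
  refine ⟨by simp only [ne_eq, Fin.mk.injEq]; omega, Or.inl (Or.inr (Or.inr (Or.inr (Or.inl ⟨?_, ?_⟩))))⟩
  · show 2*r+3 = r+2+(r+2)-1; omega
  · show r+1 = r+2-1; omega

lemma adj_wc {r : ℕ} (hr : 1 ≤ r) :
    (G r).Adj ⟨2*r+3, NN r (by omega)⟩ ⟨3*r+3, NN r (by omega)⟩ := by
  unfold G bicyclicIII
  rw [SimpleGraph.fromRel_adj]
  refine ⟨by simp only [ne_eq, Fin.mk.injEq]; omega, Or.inl (Or.inr (Or.inr (Or.inr (Or.inr ⟨?_, ?_⟩))))⟩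
  · show 2*r+3 = r+2+(r+2)-1; omega
  · show 3*r+3 = r+2+(r+2)+r-1; omega

lemma walk_chain {r : ℕ} : ∀ (d i : ℕ) (hi : i + d < r+2+(r+2)+r)
    (_ : i + d < r+2 ∨ (r+2 ≤ i ∧ i + d < 2*r+4) ∨ 2*r+4 ≤ i),
    ∃ w : (G r).Walk ⟨i, NN r (by omega)⟩ ⟨i + d, NN r hi⟩, w.length = d := by
  intro d
  induction d with
  | zero => intro i hi _; exact ⟨SimpleGraph.Walk.nil, rfl⟩
  | succ d ih =>
    intro i hi hc
    obtain ⟨w, hw⟩ := ih i (by omega) (by omega)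
    refine ⟨w.concat (adj_chain (by omega) (by omega)), ?_⟩
    rw [SimpleGraph.Walk.length_concat, hw]

lemma walk_from_u {r : ℕ} (hr : 1 ≤ r) (i : ℕ) (hi : i < r+2+(r+2)+r) :
    ∃ w : (G r).Walk ⟨r+2, NN r (by omega)⟩ ⟨i, NN r hi⟩, w.length = S r i := by
  rcases (by omega : i < r+2 ∨ (r+2 ≤ i ∧ i < 2*r+4) ∨ 2*r+4 ≤ i) with h | ⟨h1, h2⟩ | h
  · obtain ⟨w, hw⟩ := walk_chain (r:=r) i 0 (by omega) (by omega)
    refine ⟨(SimpleGraph.Walk.cons adj_u0 w).copy rfl (Fin.ext (by omega : 0 + i = i)), ?_⟩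
    rw [SimpleGraph.Walk.length_copy, SimpleGraph.Walk.length_cons, hw, S_A h]
  · obtain ⟨w, hw⟩ := walk_chain (r:=r) (i - (r+2)) (r+2) (by omega) (by omega)
    refine ⟨w.copy rfl (Fin.ext (by omega : r+2 + (i - (r+2)) = i)), ?_⟩
    rw [SimpleGraph.Walk.length_copy, hw, S_B h1 h2]
  · obtain ⟨w, hw⟩ := walk_chain (r:=r) (i - (2*r+4)) (2*r+4) (by omega) (by omega)
    refine ⟨(SimpleGraph.Walk.cons (adj_uc hr) w).copy rfl
      (Fin.ext (by omega : 2*r+4 + (i - (2*r+4)) = i)), ?_⟩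
    rw [SimpleGraph.Walk.length_copy, SimpleGraph.Walk.length_cons, hw, S_C h]
    omega

lemma walk_from_w {r : ℕ} (hr : 1 ≤ r) (i : ℕ) (hi : i < r+2+(r+2)+r) :
    ∃ w : (G r).Walk ⟨2*r+3, NN r (by omega)⟩ ⟨i, NN r hi⟩, w.length = T r i := by
  rcases (by omega : i < r+2 ∨ (r+2 ≤ i ∧ i < 2*r+4) ∨ 2*r+4 ≤ i) with h | ⟨h1, h2⟩ | h
  · obtain ⟨w, hw⟩ := walk_chain (r:=r) (r+1-i) i (by omega) (by omega)
    refine ⟨SimpleGraph.Walk.cons adj_wa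
      ((w.copy rfl (Fin.ext (by omega : i + (r+1-i) = r+1))).reverse), ?_⟩
    rw [SimpleGraph.Walk.length_cons, SimpleGraph.Walk.length_reverse,
      SimpleGraph.Walk.length_copy, hw, T_A h]
    omega
  · obtain ⟨w, hw⟩ := walk_chain (r:=r) (2*r+3-i) i (by omega) (by omega)
    refine ⟨(w.copy rfl (Fin.ext (by omega : i + (2*r+3-i) = 2*r+3))).reverse, ?_⟩
    rw [SimpleGraph.Walk.length_reverse, SimpleGraph.Walk.length_copy, hw, T_B h1 h2]
  · obtain ⟨w, hw⟩ := walk_chain (r:=r) (3*r+3-i) i (by omega) (by omega)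
    refine ⟨SimpleGraph.Walk.cons (adj_wc hr)
      ((w.copy rfl (Fin.ext (by omega : i + (3*r+3-i) = 3*r+3))).reverse), ?_⟩
    rw [SimpleGraph.Walk.length_cons, SimpleGraph.Walk.length_reverse,
      SimpleGraph.Walk.length_copy, hw, T_C h]
    omega

lemma reach {r : ℕ} (hr : 1 ≤ r) (x y : Fin (N r)) : (G r).Reachable x y := by
  obtain ⟨wx, -⟩ := walk_from_u hr x.1 x.2
  obtain ⟨wy, -⟩ := walk_from_u hr y.1 y.2
  exact ⟨wx.reverse.append wy⟩

lemma dist_le_SS {r : ℕ} (hr : 1 ≤ r) (x y : Fin (N r)) :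
    (G r).dist x y ≤ S r x.1 + S r y.1 := by
  obtain ⟨wx, hwx⟩ := walk_from_u hr x.1 x.2
  obtain ⟨wy, hwy⟩ := walk_from_u hr y.1 y.2
  have := SimpleGraph.dist_le (wx.reverse.append wy)
  rwa [SimpleGraph.Walk.length_append, SimpleGraph.Walk.length_reverse, hwx, hwy] at this

lemma dist_le_TT {r : ℕ} (hr : 1 ≤ r) (x y : Fin (N r)) :
    (G r).dist x y ≤ T r x.1 + T r y.1 := by
  obtain ⟨wx, hwx⟩ := walk_from_w hr x.1 x.2
  obtain ⟨wy, hwy⟩ := walk_from_w hr y.1 y.2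
  have := SimpleGraph.dist_le (wx.reverse.append wy)
  rwa [SimpleGraph.Walk.length_append, SimpleGraph.Walk.length_reverse, hwx, hwy] at this

lemma dist_le_chain {r : ℕ} (x y : Fin (N r)) (hxy : x.1 ≤ y.1)
    (hc : y.1 < r+2 ∨ (r+2 ≤ x.1 ∧ y.1 < 2*r+4) ∨ 2*r+4 ≤ x.1) :
    (G r).dist x y ≤ y.1 - x.1 := by
  have hy : y.1 < r+2+(r+2)+r := y.2
  obtain ⟨w, hw⟩ := walk_chain (r:=r) (y.1 - x.1) x.1 (by omega) (by omega)
  have := SimpleGraph.dist_le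
    (w.copy (Fin.ext (rfl : x.1 = x.1)) (Fin.ext (by omega : x.1 + (y.1 - x.1) = y.1)))
  rwa [SimpleGraph.Walk.length_copy, hw] at this

lemma dist_le_f {r : ℕ} (hr : 1 ≤ r) (x y : Fin (N r)) :
    (G r).dist x y ≤ f r x.1 y.1 := by
  have hx : x.1 < r+2+(r+2)+r := x.2
  have hy : y.1 < r+2+(r+2)+r := y.2
  have hSS := dist_le_SS hr x y
  have hTT := dist_le_TT hr x y
  rcases (by omega : x.1 < r+2 ∨ (r+2 ≤ x.1 ∧ x.1 < 2*r+4) ∨ 2*r+4 ≤ x.1) with h1 | ⟨h1, h2⟩ | h1 <;>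
    rcases (by omega : y.1 < r+2 ∨ (r+2 ≤ y.1 ∧ y.1 < 2*r+4) ∨ 2*r+4 ≤ y.1) with g1 | ⟨g1, g2⟩ | g1
  · rw [fAA h1 g1]
    rcases Nat.le_total x.1 y.1 with hle | hle
    · have := dist_le_chain x y hle (by omega); omega
    · have := dist_le_chain y x hle (by omega); rw [SimpleGraph.dist_comm] at this; omega
  · rw [fAB h1 g1 g2, S_A h1, S_B g1 g2, T_A h1, T_B g1 g2] at *; omega
  · rw [fAC h1 g1, S_A h1, S_C g1, T_A h1, T_C g1] at *; omega
  · rw [fBA h1 h2 g1, S_B h1 h2, S_A g1, T_B h1 h2, T_A g1] at *; omega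
  · rw [fBB h1 h2 g1 g2]
    rcases Nat.le_total x.1 y.1 with hle | hle
    · have := dist_le_chain x y hle (by omega); omega
    · have := dist_le_chain y x hle (by omega); rw [SimpleGraph.dist_comm] at this; omega
  · rw [fBC h1 h2 g1, S_B h1 h2, S_C g1, T_B h1 h2, T_C g1] at *; omega
  · rw [fCA h1 g1, S_C h1, S_A g1, T_C h1, T_A g1] at *; omega
  · rw [fCB h1 g1 g2, S_C h1, S_B g1 g2, T_C h1, T_B g1 g2] at *; omega
  · rw [fCC h1 g1]
    rcases Nat.le_total x.1 y.1 with hle | hle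
    · have := dist_le_chain x y hle (by omega); omega
    · have := dist_le_chain y x hle (by omega); rw [SimpleGraph.dist_comm] at this; omega

lemma lip_adj {r : ℕ} (hr : 1 ≤ r) {a b : Fin (N r)} (x : Fin (N r)) (h : (G r).Adj a b) :
    f r a.1 x.1 ≤ f r b.1 x.1 + 1 := by
  have ha : a.1 < r+2+(r+2)+r := a.2
  have hb : b.1 < r+2+(r+2)+r := b.2
  have hx : x.1 < r+2+(r+2)+r := x.2
  unfold G bicyclicIII at h
  rw [SimpleGraph.fromRel_adj] at h
  obtain ⟨-, h | h⟩ := h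
  · exact (lip_core hr (by omega) (by omega) (by omega) h).1
  · exact (lip_core hr (by omega) (by omega) (by omega) h).2

lemma f_le_len {r : ℕ} (hr : 1 ≤ r) : ∀ {a b : Fin (N r)} (p : (G r).Walk a b),
    f r a.1 b.1 ≤ p.length := by
  intro a b p
  induction p with
  | nil => rw [f_self]; exact Nat.zero_le _
  | cons h p ih =>
    rw [SimpleGraph.Walk.length_cons]
    exact le_trans (lip_adj hr _ h) (Nat.add_le_add_right ih 1)

lemma dist_eq {r : ℕ} (hr : 1 ≤ r) (x y : Fin (N r)) :
    (G r).dist x y = f r x.1 y.1 := by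
  refine le_antisymm (dist_le_f hr x y) ?_
  obtain ⟨p, hp⟩ := (reach hr x y).exists_walk_length_eq_dist
  rw [← hp]
  exact f_le_len hr p

/-- the pair (B,1),(C,1) is not resolved by any vertex in A ∪ {u,w}. -/
lemma P1 {r z : ℕ} (hr : 1 ≤ r) (hz : z < r+2 ∨ z = r+2 ∨ z = 2*r+3) :
    f r (r+3) z = f r (2*r+4) z := by
  rcases hz with h | rfl | rfl
  · rw [fBA (i:=r+3) (j:=z) (by omega) (by omega) h, fCA (i:=2*r+4) (j:=z) (by omega) h]; omega
  · rw [fBB (i:=r+3) (j:=r+2) (by omega) (by omega) (by omega) (by omega),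
      fCB (i:=2*r+4) (j:=r+2) (by omega) (by omega) (by omega)]; omega
  · rw [fBB (i:=r+3) (j:=2*r+3) (by omega) (by omega) (by omega) (by omega),
      fCB (i:=2*r+4) (j:=2*r+3) (by omega) (by omega) (by omega)]; omega

/-- the pair (A,1),(C,1) is not resolved by any vertex (B,s), 0 ≤ s ≤ r. -/
lemma P2 {r z : ℕ} (hr : 1 ≤ r) (h1 : r+2 ≤ z) (h2 : z ≤ 2*r+2) :
    f r 0 z = f r (2*r+4) z := by
  rw [fAB (i:=0) (j:=z) (by omega) h1 (by omega), fCB (i:=2*r+4) (j:=z) (by omega) h1 (by omega)]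
  omega

/-- the pair (A,1),(B,1) is not resolved by u nor any vertex of C. -/
lemma P3 {r z : ℕ} (hr : 1 ≤ r) (hz : z = r+2 ∨ 2*r+4 ≤ z) (hz2 : z < 3*r+4) :
    f r 0 z = f r (r+3) z := by
  rcases hz with rfl | h
  · rw [fAB (i:=0) (j:=r+2) (by omega) (by omega) (by omega),
      fBB (i:=r+3) (j:=r+2) (by omega) (by omega) (by omega) (by omega)]; omega
  · rw [fAC (i:=0) (j:=z) (by omega) h, fBC (i:=r+3) (j:=z) (by omega) (by omega) h]; omega

/-- the pair (A,r+2),(C,r) is not resolved by any vertex (B,s), 1 ≤ s ≤ r+1. -/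
lemma P4 {r z : ℕ} (hr : 1 ≤ r) (h1 : r+3 ≤ z) (h2 : z ≤ 2*r+3) :
    f r (r+1) z = f r (3*r+3) z := by
  rw [fAB (i:=r+1) (j:=z) (by omega) (by omega) (by omega),
    fCB (i:=3*r+3) (j:=z) (by omega) (by omega) (by omega)]
  omega

/-- the pair (A,r+2),(B,r) is not resolved by w nor any vertex of C. -/
lemma P5 {r z : ℕ} (hr : 1 ≤ r) (hz : z = 2*r+3 ∨ (2*r+4 ≤ z ∧ z < 3*r+4)) :
    f r (r+1) z = f r (2*r+2) z := by
  rcases hz with rfl | ⟨h1, h2⟩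
  · rw [fAB (i:=r+1) (j:=2*r+3) (by omega) (by omega) (by omega),
      fBB (i:=2*r+2) (j:=2*r+3) (by omega) (by omega) (by omega) (by omega)]; omega
  · rw [fAC (i:=r+1) (j:=z) (by omega) h1, fBC (i:=2*r+2) (j:=z) (by omega) (by omega) h1]; omega

lemma core_AB {r i1 s2 : ℕ} (hr : 1 ≤ r) (hA : i1 < r+2) (hs1 : 1 ≤ s2) (hs2 : s2 ≤ r) :
    ∃ x y : ℕ, x < 3*r+4 ∧ y < 3*r+4 ∧ x ≠ y ∧
      f r x i1 = f r y i1 ∧ f r x (r+2+s2) = f r y (r+2+s2) := by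
  rcases (by omega : (s2 ≤ i1 ∧ i1+s2 ≤ r) ∨ (i1+1 ≤ s2 ∧ i1+s2 ≤ r) ∨ (i1+s2 = r+1) ∨
      (i1 ≤ s2 ∧ r+2 ≤ i1+s2) ∨ (s2+1 ≤ i1 ∧ r+2 ≤ i1+s2)) with
    ⟨c1, c2⟩ | ⟨c1, c2⟩ | c1 | ⟨c1, c2⟩ | ⟨c1, c2⟩
  · refine ⟨r+2+(s2+r+1-i1), 2*r+3+(r+1-i1-s2), by omega, by omega, by omega, ?_, ?_⟩
    · rw [fBA (i:=r+2+(s2+r+1-i1)) (j:=i1) (by omega) (by omega) hA,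
        fCA (i:=2*r+3+(r+1-i1-s2)) (j:=i1) (by omega) hA]; omega
    · rw [fBB (i:=r+2+(s2+r+1-i1)) (j:=r+2+s2) (by omega) (by omega) (by omega) (by omega),
        fCB (i:=2*r+3+(r+1-i1-s2)) (j:=r+2+s2) (by omega) (by omega) (by omega)]; omega
  · refine ⟨r+2+i1-s2, 2*r+3+(r+1-i1-s2), by omega, by omega, by omega, ?_, ?_⟩
    · rw [fAA (i:=r+2+i1-s2) (j:=i1) (by omega) hA,
        fCA (i:=2*r+3+(r+1-i1-s2)) (j:=i1) (by omega) hA]; omega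
    · rw [fAB (i:=r+2+i1-s2) (j:=r+2+s2) (by omega) (by omega) (by omega),
        fCB (i:=2*r+3+(r+1-i1-s2)) (j:=r+2+s2) (by omega) (by omega) (by omega)]; omega
  · refine ⟨r+2+(s2-1), r+2+(s2+1), by omega, by omega, by omega, ?_, ?_⟩
    · rw [fBA (i:=r+2+(s2-1)) (j:=i1) (by omega) (by omega) hA,
        fBA (i:=r+2+(s2+1)) (j:=i1) (by omega) (by omega) hA]; omega
    · rw [fBB (i:=r+2+(s2-1)) (j:=r+2+s2) (by omega) (by omega) (by omega) (by omega),
        fBB (i:=r+2+(s2+1)) (j:=r+2+s2) (by omega) (by omega) (by omega) (by omega)]; omega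
  · refine ⟨r+2+(s2-i1), 2*r+3+(2*r+2-i1-s2), by omega, by omega, by omega, ?_, ?_⟩
    · rw [fBA (i:=r+2+(s2-i1)) (j:=i1) (by omega) (by omega) hA,
        fCA (i:=2*r+3+(2*r+2-i1-s2)) (j:=i1) (by omega) hA]; omega
    · rw [fBB (i:=r+2+(s2-i1)) (j:=r+2+s2) (by omega) (by omega) (by omega) (by omega),
        fCB (i:=2*r+3+(2*r+2-i1-s2)) (j:=r+2+s2) (by omega) (by omega) (by omega)]; omega
  · refine ⟨i1-s2-1, 2*r+3+(2*r+2-i1-s2), by omega, by omega, by omega, ?_, ?_⟩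
    · rw [fAA (i:=i1-s2-1) (j:=i1) (by omega) hA,
        fCA (i:=2*r+3+(2*r+2-i1-s2)) (j:=i1) (by omega) hA]; omega
    · rw [fAB (i:=i1-s2-1) (j:=r+2+s2) (by omega) (by omega) (by omega),
        fCB (i:=2*r+3+(2*r+2-i1-s2)) (j:=r+2+s2) (by omega) (by omega) (by omega)]; omega

lemma core_AC {r i1 s2 : ℕ} (hr : 1 ≤ r) (hA : i1 < r+2) (hs1 : 1 ≤ s2) (hs2 : s2 ≤ r) :
    ∃ x y : ℕ, x < 3*r+4 ∧ y < 3*r+4 ∧ x ≠ y ∧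
      f r x i1 = f r y i1 ∧ f r x (2*r+3+s2) = f r y (2*r+3+s2) := by
  rcases (by omega : (i1 = s2) ∨ (s2+1 ≤ i1 ∧ i1+s2 ≤ r+1) ∨ (s2+1 ≤ i1 ∧ r+2 ≤ i1+s2) ∨
      (i1+1 ≤ s2 ∧ i1+s2 ≤ r+1) ∨ (i1+1 ≤ s2 ∧ r+2 ≤ i1+s2)) with
    c1 | ⟨c1, c2⟩ | ⟨c1, c2⟩ | ⟨c1, c2⟩ | ⟨c1, c2⟩
  · subst c1
    refine ⟨r+2+(r-i1), r+2+(r+2-i1), by omega, by omega, by omega, ?_, ?_⟩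
    · rw [fBA (i:=r+2+(r-i1)) (j:=i1) (by omega) (by omega) hA,
        fBA (i:=r+2+(r+2-i1)) (j:=i1) (by omega) (by omega) hA]; omega
    · rw [fBC (i:=r+2+(r-i1)) (j:=2*r+3+i1) (by omega) (by omega) (by omega),
        fBC (i:=r+2+(r+2-i1)) (j:=2*r+3+i1) (by omega) (by omega) (by omega)]; omega
  · refine ⟨2*r+3+(s2+r+1-i1), r+2+(r+1-i1-s2), by omega, by omega, by omega, ?_, ?_⟩
    · rw [fCA (i:=2*r+3+(s2+r+1-i1)) (j:=i1) (by omega) hA,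
        fBA (i:=r+2+(r+1-i1-s2)) (j:=i1) (by omega) (by omega) hA]; omega
    · rw [fCC (i:=2*r+3+(s2+r+1-i1)) (j:=2*r+3+s2) (by omega) (by omega),
        fBC (i:=r+2+(r+1-i1-s2)) (j:=2*r+3+s2) (by omega) (by omega) (by omega)]; omega
  · refine ⟨i1-s2-1, r+2+(2*r+2-i1-s2), by omega, by omega, by omega, ?_, ?_⟩
    · rw [fAA (i:=i1-s2-1) (j:=i1) (by omega) hA,
        fBA (i:=r+2+(2*r+2-i1-s2)) (j:=i1) (by omega) (by omega) hA]; omega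
    · rw [fAC (i:=i1-s2-1) (j:=2*r+3+s2) (by omega) (by omega),
        fBC (i:=r+2+(2*r+2-i1-s2)) (j:=2*r+3+s2) (by omega) (by omega) (by omega)]; omega
  · refine ⟨r+2+i1-s2, r+2+(r+1-i1-s2), by omega, by omega, by omega, ?_, ?_⟩
    · rw [fAA (i:=r+2+i1-s2) (j:=i1) (by omega) hA,
        fBA (i:=r+2+(r+1-i1-s2)) (j:=i1) (by omega) (by omega) hA]; omega
    · rw [fAC (i:=r+2+i1-s2) (j:=2*r+3+s2) (by omega) (by omega),
        fBC (i:=r+2+(r+1-i1-s2)) (j:=2*r+3+s2) (by omega) (by omega) (by omega)]; omega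
  · refine ⟨2*r+3+(s2-i1), r+2+(2*r+2-i1-s2), by omega, by omega, by omega, ?_, ?_⟩
    · rw [fCA (i:=2*r+3+(s2-i1)) (j:=i1) (by omega) hA,
        fBA (i:=r+2+(2*r+2-i1-s2)) (j:=i1) (by omega) (by omega) hA]; omega
    · rw [fCC (i:=2*r+3+(s2-i1)) (j:=2*r+3+s2) (by omega) (by omega),
        fBC (i:=r+2+(2*r+2-i1-s2)) (j:=2*r+3+s2) (by omega) (by omega) (by omega)]; omega

lemma core_BC {r s1 s2 : ℕ} (hr : 1 ≤ r) (h11 : 1 ≤ s1) (h12 : s1 ≤ r)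
    (h21 : 1 ≤ s2) (h22 : s2 ≤ r) :
    ∃ x y : ℕ, x < 3*r+4 ∧ y < 3*r+4 ∧ x ≠ y ∧
      f r x (r+2+s1) = f r y (r+2+s1) ∧ f r x (2*r+3+s2) = f r y (2*r+3+s2) := by
  rcases (by omega : (s1 = s2) ∨ (s1+1 ≤ s2 ∧ s1+s2 ≤ r) ∨ (s2+1 ≤ s1 ∧ s1+s2 ≤ r) ∨
      (s1+s2 = r+1 ∧ 2*s1 ≤ r+1) ∨ (s1+s2 = r+1 ∧ r+2 ≤ 2*s1) ∨
      (s2 ≤ s1 ∧ r+2 ≤ s1+s2) ∨ (s1+1 ≤ s2 ∧ r+2 ≤ s1+s2)) with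
    c1 | ⟨c1, c2⟩ | ⟨c1, c2⟩ | ⟨c1, c2⟩ | ⟨c1, c2⟩ | ⟨c1, c2⟩ | ⟨c1, c2⟩
  · subst c1
    refine ⟨r-s1, r+2-s1, by omega, by omega, by omega, ?_, ?_⟩
    · rw [fAB (i:=r-s1) (j:=r+2+s1) (by omega) (by omega) (by omega),
        fAB (i:=r+2-s1) (j:=r+2+s1) (by omega) (by omega) (by omega)]; omega
    · rw [fAC (i:=r-s1) (j:=2*r+3+s1) (by omega) (by omega),
        fAC (i:=r+2-s1) (j:=2*r+3+s1) (by omega) (by omega)]; omega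
  · refine ⟨r-s1-s2, r+2+(r+1+s1-s2), by omega, by omega, by omega, ?_, ?_⟩
    · rw [fAB (i:=r-s1-s2) (j:=r+2+s1) (by omega) (by omega) (by omega),
        fBB (i:=r+2+(r+1+s1-s2)) (j:=r+2+s1) (by omega) (by omega) (by omega) (by omega)]; omega
    · rw [fAC (i:=r-s1-s2) (j:=2*r+3+s2) (by omega) (by omega),
        fBC (i:=r+2+(r+1+s1-s2)) (j:=2*r+3+s2) (by omega) (by omega) (by omega)]; omega
  · refine ⟨r-s1-s2, 2*r+3+(r+1+s2-s1), by omega, by omega, by omega, ?_, ?_⟩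
    · rw [fAB (i:=r-s1-s2) (j:=r+2+s1) (by omega) (by omega) (by omega),
        fCB (i:=2*r+3+(r+1+s2-s1)) (j:=r+2+s1) (by omega) (by omega) (by omega)]; omega
    · rw [fAC (i:=r-s1-s2) (j:=2*r+3+s2) (by omega) (by omega),
        fCC (i:=2*r+3+(r+1+s2-s1)) (j:=2*r+3+s2) (by omega) (by omega)]; omega
  · refine ⟨r+2, r+2+2*s1, by omega, by omega, by omega, ?_, ?_⟩
    · rw [fBB (i:=r+2) (j:=r+2+s1) (by omega) (by omega) (by omega) (by omega),
        fBB (i:=r+2+2*s1) (j:=r+2+s1) (by omega) (by omega) (by omega) (by omega)]; omega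
    · rw [fBC (i:=r+2) (j:=2*r+3+s2) (by omega) (by omega) (by omega),
        fBC (i:=r+2+2*s1) (j:=2*r+3+s2) (by omega) (by omega) (by omega)]; omega
  · refine ⟨r+2, 2*r+3+2*s2, by omega, by omega, by omega, ?_, ?_⟩
    · rw [fBB (i:=r+2) (j:=r+2+s1) (by omega) (by omega) (by omega) (by omega),
        fCB (i:=2*r+3+2*s2) (j:=r+2+s1) (by omega) (by omega) (by omega)]; omega
    · rw [fBC (i:=r+2) (j:=2*r+3+s2) (by omega) (by omega) (by omega),
        fCC (i:=2*r+3+2*s2) (j:=2*r+3+s2) (by omega) (by omega)]; omega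
  · refine ⟨2*r+3-s1-s2, r+2+(s1-s2), by omega, by omega, by omega, ?_, ?_⟩
    · rw [fAB (i:=2*r+3-s1-s2) (j:=r+2+s1) (by omega) (by omega) (by omega),
        fBB (i:=r+2+(s1-s2)) (j:=r+2+s1) (by omega) (by omega) (by omega) (by omega)]; omega
    · rw [fAC (i:=2*r+3-s1-s2) (j:=2*r+3+s2) (by omega) (by omega),
        fBC (i:=r+2+(s1-s2)) (j:=2*r+3+s2) (by omega) (by omega) (by omega)]; omega
  · refine ⟨2*r+3-s1-s2, 2*r+3+(s2-s1), by omega, by omega, by omega, ?_, ?_⟩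
    · rw [fAB (i:=2*r+3-s1-s2) (j:=r+2+s1) (by omega) (by omega) (by omega),
        fCB (i:=2*r+3+(s2-s1)) (j:=r+2+s1) (by omega) (by omega) (by omega)]; omega
    · rw [fAC (i:=2*r+3-s1-s2) (j:=2*r+3+s2) (by omega) (by omega),
        fCC (i:=2*r+3+(s2-s1)) (j:=2*r+3+s2) (by omega) (by omega)]; omega

lemma core_OB {r zo zb : ℕ} (hr : 1 ≤ r) (ho : zo < r+2 ∨ zo = r+2 ∨ zo = 2*r+3)
    (hb1 : r+3 ≤ zb) (hb2 : zb ≤ 2*r+2) :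
    ∃ x y : ℕ, x < 3*r+4 ∧ y < 3*r+4 ∧ x ≠ y ∧
      f r x zo = f r y zo ∧ f r x zb = f r y zb := by
  rcases ho with hA | rfl | rfl
  · obtain ⟨s2, rfl, hs1, hs2⟩ : ∃ s2, zb = r+2+s2 ∧ 1 ≤ s2 ∧ s2 ≤ r :=
      ⟨zb - (r+2), by omega, by omega, by omega⟩
    exact core_AB hr hA hs1 hs2
  · exact ⟨0, 2*r+4, by omega, by omega, by omega,
      P2 hr (by omega) (by omega), P2 hr (by omega) (by omega)⟩
  · exact ⟨r+1, 3*r+3, by omega, by omega, by omega,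
      P4 hr (by omega) (by omega), P4 hr (by omega) (by omega)⟩

lemma core_OC {r zo zc : ℕ} (hr : 1 ≤ r) (ho : zo < r+2 ∨ zo = r+2 ∨ zo = 2*r+3)
    (hc1 : 2*r+4 ≤ zc) (hc2 : zc < 3*r+4) :
    ∃ x y : ℕ, x < 3*r+4 ∧ y < 3*r+4 ∧ x ≠ y ∧
      f r x zo = f r y zo ∧ f r x zc = f r y zc := by
  rcases ho with hA | rfl | rfl
  · obtain ⟨s2, rfl, hs1, hs2⟩ : ∃ s2, zc = 2*r+3+s2 ∧ 1 ≤ s2 ∧ s2 ≤ r :=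
      ⟨zc - (2*r+3), by omega, by omega, by omega⟩
    exact core_AC hr hA hs1 hs2
  · exact ⟨0, r+3, by omega, by omega, by omega,
      P3 hr (Or.inl rfl) (by omega), P3 hr (Or.inr hc1) hc2⟩
  · exact ⟨r+1, 2*r+2, by omega, by omega, by omega,
      P5 hr (Or.inl rfl), P5 hr (Or.inr ⟨hc1, hc2⟩)⟩

lemma core_arith (r i1 i2 : ℕ) (hr : 1 ≤ r) (h1 : i1 < 3*r+4) (h2 : i2 < 3*r+4) :
    ∃ x y : ℕ, x < 3*r+4 ∧ y < 3*r+4 ∧ x ≠ y ∧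
      f r x i1 = f r y i1 ∧ f r x i2 = f r y i2 := by
  rcases (by omega : (i1 < r+2 ∨ i1 = r+2 ∨ i1 = 2*r+3) ∨ (r+3 ≤ i1 ∧ i1 ≤ 2*r+2) ∨
      2*r+4 ≤ i1) with o1 | ⟨b1, b1'⟩ | c1 <;>
    rcases (by omega : (i2 < r+2 ∨ i2 = r+2 ∨ i2 = 2*r+3) ∨ (r+3 ≤ i2 ∧ i2 ≤ 2*r+2) ∨
      2*r+4 ≤ i2) with o2 | ⟨b2, b2'⟩ | c2
  · exact ⟨r+3, 2*r+4, by omega, by omega, by omega, P1 hr o1, P1 hr o2⟩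
  · exact core_OB hr o1 b2 b2'
  · exact core_OC hr o1 c2 h2
  · obtain ⟨x, y, hx, hy, hne, e1, e2⟩ := core_OB hr o2 b1 b1'
    exact ⟨x, y, hx, hy, hne, e2, e1⟩
  · exact ⟨0, 2*r+4, by omega, by omega, by omega,
      P2 hr (by omega) (by omega), P2 hr (by omega) (by omega)⟩
  · obtain ⟨s1, rfl, hs11, hs12⟩ : ∃ s1, i1 = r+2+s1 ∧ 1 ≤ s1 ∧ s1 ≤ r :=
      ⟨i1 - (r+2), by omega, by omega, by omega⟩
    obtain ⟨s2, rfl, hs21, hs22⟩ : ∃ s2, i2 = 2*r+3+s2 ∧ 1 ≤ s2 ∧ s2 ≤ r :=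
      ⟨i2 - (2*r+3), by omega, by omega, by omega⟩
    exact core_BC hr hs11 hs12 hs21 hs22
  · obtain ⟨x, y, hx, hy, hne, e1, e2⟩ := core_OC hr o2 c1 h1
    exact ⟨x, y, hx, hy, hne, e2, e1⟩
  · obtain ⟨s1, rfl, hs11, hs12⟩ : ∃ s1, i2 = r+2+s1 ∧ 1 ≤ s1 ∧ s1 ≤ r :=
      ⟨i2 - (r+2), by omega, by omega, by omega⟩
    obtain ⟨s2, rfl, hs21, hs22⟩ : ∃ s2, i1 = 2*r+3+s2 ∧ 1 ≤ s2 ∧ s2 ≤ r :=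
      ⟨i1 - (2*r+3), by omega, by omega, by omega⟩
    obtain ⟨x, y, hx, hy, hne, e1, e2⟩ := core_BC hr hs11 hs12 hs21 hs22
    exact ⟨x, y, hx, hy, hne, e2, e1⟩
  · exact ⟨0, r+3, by omega, by omega, by omega,
      P3 hr (Or.inr c1) h1, P3 hr (Or.inr c2) h2⟩

lemma res_arith {r i j : ℕ} (hr : 1 ≤ r) (hi : i < 3*r+4) (hj : j < 3*r+4)
    (e0 : f r i 0 = f r j 0) (e1 : f r i 1 = f r j 1)
    (e2 : f r i (r+2+1) = f r j (r+2+1)) : i = j := by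
  rcases (by omega : i < r+2 ∨ (r+2 ≤ i ∧ i < 2*r+4) ∨ 2*r+4 ≤ i) with hA | ⟨hB, hB'⟩ | hC <;>
    rcases (by omega : j < r+2 ∨ (r+2 ≤ j ∧ j < 2*r+4) ∨ 2*r+4 ≤ j) with gA | ⟨gB, gB'⟩ | gC
  · rw [fAA (i:=i) (j:=0) hA (by omega), fAA (i:=j) (j:=0) gA (by omega)] at e0; omega
  · rw [fAA (i:=i) (j:=0) hA (by omega), fBA (i:=j) (j:=0) gB gB' (by omega)] at e0
    rw [fAA (i:=i) (j:=1) hA (by omega), fBA (i:=j) (j:=1) gB gB' (by omega)] at e1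
    omega
  · rw [fAA (i:=i) (j:=0) hA (by omega), fCA (i:=j) (j:=0) gC (by omega)] at e0
    rw [fAA (i:=i) (j:=1) hA (by omega), fCA (i:=j) (j:=1) gC (by omega)] at e1
    omega
  · rw [fBA (i:=i) (j:=0) hB hB' (by omega), fAA (i:=j) (j:=0) gA (by omega)] at e0
    rw [fBA (i:=i) (j:=1) hB hB' (by omega), fAA (i:=j) (j:=1) gA (by omega)] at e1
    omega
  · rw [fBA (i:=i) (j:=0) hB hB' (by omega), fBA (i:=j) (j:=0) gB gB' (by omega)] at e0; omega
  · rw [fBA (i:=i) (j:=0) hB hB' (by omega), fCA (i:=j) (j:=0) gC (by omega)] at e0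
    rw [fBB (i:=i) (j:=r+2+1) hB hB' (by omega) (by omega),
      fCB (i:=j) (j:=r+2+1) gC (by omega) (by omega)] at e2
    omega
  · rw [fCA (i:=i) (j:=0) hC (by omega), fAA (i:=j) (j:=0) gA (by omega)] at e0
    rw [fCA (i:=i) (j:=1) hC (by omega), fAA (i:=j) (j:=1) gA (by omega)] at e1
    omega
  · rw [fCA (i:=i) (j:=0) hC (by omega), fBA (i:=j) (j:=0) gB gB' (by omega)] at e0
    rw [fCB (i:=i) (j:=r+2+1) hC (by omega) (by omega),
      fBB (i:=j) (j:=r+2+1) gB gB' (by omega) (by omega)] at e2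
    omega
  · rw [fCA (i:=i) (j:=0) hC (by omega), fCA (i:=j) (j:=0) gC (by omega)] at e0; omega

lemma core_fin {r : ℕ} (hr : 1 ≤ r) (z1 z2 : Fin (N r)) :
    ∃ x y : Fin (N r), x ≠ y ∧ (G r).dist x z1 = (G r).dist y z1 ∧
      (G r).dist x z2 = (G r).dist y z2 := by
  have hz1 : z1.1 < r+2+(r+2)+r := z1.2
  have hz2 : z2.1 < r+2+(r+2)+r := z2.2
  obtain ⟨x, y, hx, hy, hne, e1, e2⟩ := core_arith r z1.1 z2.1 hr (by omega) (by omega)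
  refine ⟨⟨x, NN r (by omega)⟩, ⟨y, NN r (by omega)⟩, ?_, ?_, ?_⟩
  · simp only [ne_eq, Fin.mk.injEq]; omega
  · rw [dist_eq hr, dist_eq hr]; exact e1
  · rw [dist_eq hr, dist_eq hr]; exact e2

lemma res_set {r : ℕ} (hr : 1 ≤ r) :
    IsResolving (G r) {(⟨0, NN r (by omega)⟩ : Fin (N r)), ⟨1, NN r (by omega)⟩,
      ⟨r+2+1, NN r (by omega)⟩} := by
  intro u v h
  have h0 := h _ (Set.mem_insert _ _)
  have h1 := h _ (Set.mem_insert_of_mem _ (Set.mem_insert _ _))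
  have h2 := h _ (Set.mem_insert_of_mem _ (Set.mem_insert_of_mem _ rfl))
  rw [dist_eq hr, dist_eq hr] at h0 h1 h2
  have hu : u.1 < r+2+(r+2)+r := u.2
  have hv : v.1 < r+2+(r+2)+r := v.2
  exact Fin.ext (res_arith hr (by omega) (by omega) h0 h1 h2)

end Bic

theorem bicyclicIII_p_eq_q_diff_two (p q r : ℕ)
    (hr : 1 ≤ r) (hpq : p = q) (hq : q = r + 2) :
    metricDim (bicyclicIII p q r) = 3
    ∧ IsResolving (bicyclicIII p q r)
      {(⟨0, by omega⟩ : Fin (p + q + r)), ⟨1, by omega⟩, ⟨p + 1, by omega⟩} := by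
  subst hq
  subst hpq
  constructor
  · have hmem : 3 ∈ {n | ∃ W : Finset (Fin (Bic.N r)),
        IsResolving (Bic.G r) (↑W) ∧ W.card = n} := by
      refine ⟨{⟨0, Bic.NN r (by omega)⟩, ⟨1, Bic.NN r (by omega)⟩,
        ⟨r+2+1, Bic.NN r (by omega)⟩}, ?_, ?_⟩
      · intro u v h
        refine Bic.res_set hr u v ?_
        intro w hw
        exact h w (by simpa using hw)
      · rw [Finset.card_insert_of_notMem, Finset.card_insert_of_notMem,
          Finset.card_singleton]
        · simp only [Finset.mem_singleton, Fin.mk.injEq]; omega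
        · simp only [Finset.mem_insert, Finset.mem_singleton, Fin.mk.injEq]; omega
    refine le_antisymm (Nat.sInf_le hmem) (le_csInf ⟨3, hmem⟩ ?_)
    rintro n ⟨W, hW, rfl⟩
    by_contra hlt
    push_neg at hlt
    obtain ⟨z1, z2, hcov⟩ : ∃ z1 z2 : Fin (Bic.N r), ∀ w ∈ W, w = z1 ∨ w = z2 := by
      rcases (by omega : W.card = 0 ∨ W.card = 1 ∨ W.card = 2) with h | h | h
      · refine ⟨⟨0, Bic.NN r (by omega)⟩, ⟨0, Bic.NN r (by omega)⟩, ?_⟩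
        simp [Finset.card_eq_zero.mp h]
      · obtain ⟨a, rfl⟩ := Finset.card_eq_one.mp h
        exact ⟨a, a, by simp⟩
      · obtain ⟨a, b, -, rfl⟩ := Finset.card_eq_two.mp h
        exact ⟨a, b, fun w hw => by simpa using hw⟩
    obtain ⟨x, y, hxy, e1, e2⟩ := Bic.core_fin hr z1 z2
    refine hxy (hW x y ?_)
    intro w hw
    rcases hcov w (Finset.mem_coe.mp hw) with rfl | rfl
    exacts [e1, e2]
  · exact Bic.res_set hr
end

section
/- Let C_{p,q,r} be the type-III bicyclic graph with p = r, q > r, q − r > 2 and q − r ≠ 4. Then W = {v_1, v_{p+2}} is a resolving set and β(C_{p,q,r}) = 2. -/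
namespace BicyclicAux
set_option maxHeartbeats 4000000
set_option linter.unusedSectionVars false

/-- distance to vertex index 0 -/
def d1 (p q r i : ℕ) : ℕ :=
  if i < p then i
  else if i < p + q then min (i - p + 1) (p + q - 1 - i + p)
  else min (i - (p + q) + 2) (p + q + r - i + p)

/-- distance to vertex index p+1 -/
def d2 (p q r i : ℕ) : ℕ :=
  if i < p then min (i + 2) (min (q - 2) (p + 2) + p - i)
  else if i = p then 1
  else if i < p + q then min (i - p - 1) (p + q - 1 - i + (p + 2))
  else min (i - (p + q) + 2) (p + q + r - i + min (q - 2) (p + 2))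

/-- the defining relation, on ℕ -/
def P (p q r a b : ℕ) : Prop :=
  (a + 1 = b ∧ (b < p ∨ (p ≤ a ∧ b < p + q) ∨ p + q ≤ a))
  ∨ (a = p ∧ b = 0)
  ∨ (a = p ∧ b = p + q)
  ∨ (a = p + q - 1 ∧ b = p - 1)
  ∨ (a = p + q - 1 ∧ b = p + q + r - 1)

lemma adj_iff_s18 (p q r : ℕ) (u v : Fin (p + q + r)) :
    (bicyclicIII p q r).Adj u v ↔
      u ≠ v ∧ (P p q r u.val v.val ∨ P p q r v.val u.val) := by
  unfold bicyclicIII P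
  rw [SimpleGraph.fromRel_adj]

section params
variable {p q r : ℕ} (hp : 1 ≤ p) (hpr : p = r) (h2 : r + 2 < q)

include hp hpr h2

lemma d1_zero : ∀ a, a < p + q + r → (d1 p q r a = 0 ↔ a = 0) := by
  intro a ha; unfold d1; split_ifs <;>
    first | omega | (simp only [false_iff]; omega)

lemma d2_zero : ∀ a, a < p + q + r → (d2 p q r a = 0 ↔ a = p + 1) := by
  intro a ha; unfold d2; split_ifs <;>
    first | omega | (simp only [false_iff]; omega)

lemma lip1 : ∀ a b, a < p + q + r → b < p + q + r → P p q r a b →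
    d1 p q r a ≤ d1 p q r b + 1 ∧ d1 p q r b ≤ d1 p q r a + 1 := by
  intro a b ha hb hP
  unfold P at hP; unfold d1
  rcases hP with ⟨h,h'⟩|⟨h,h'⟩|⟨h,h'⟩|⟨h,h'⟩|⟨h,h'⟩ <;> split_ifs <;> omega

lemma lip2 : ∀ a b, a < p + q + r → b < p + q + r → P p q r a b →
    d2 p q r a ≤ d2 p q r b + 1 ∧ d2 p q r b ≤ d2 p q r a + 1 := by
  intro a b ha hb hP
  unfold P at hP; unfold d2
  rcases hP with ⟨h,h'⟩|⟨h,h'⟩|⟨h,h'⟩|⟨h,h'⟩|⟨h,h'⟩ <;> split_ifs <;> omega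

lemma desc1 : ∀ a, a < p + q + r → a ≠ 0 → ∃ b, b < p + q + r ∧ b ≠ a ∧
    (P p q r a b ∨ P p q r b a) ∧ d1 p q r b + 1 = d1 p q r a := by
  intro a ha h0
  by_cases hA : a < p
  · exact ⟨a - 1, by omega, by omega, Or.inr (by unfold P; omega),
      by unfold d1; split_ifs <;> omega⟩
  by_cases hx : a = p
  · exact ⟨0, by omega, by omega, Or.inl (by unfold P; omega),
      by unfold d1; split_ifs <;> omega⟩
  by_cases hB : a < p + q
  · by_cases hL : a - p + 1 ≤ p + q - 1 - a + p
    · exact ⟨a - 1, by omega, by omega, Or.inr (by unfold P; omega),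
        by unfold d1; split_ifs <;> omega⟩
    by_cases hy : a + 1 < p + q
    · exact ⟨a + 1, by omega, by omega, Or.inl (by unfold P; omega),
        by unfold d1; split_ifs <;> omega⟩
    · exact ⟨p - 1, by omega, by omega, Or.inl (by unfold P; omega),
        by unfold d1; split_ifs <;> omega⟩
  by_cases hc : a = p + q
  · exact ⟨p, by omega, by omega, Or.inr (by unfold P; omega),
      by unfold d1; split_ifs <;> omega⟩
  · exact ⟨a - 1, by omega, by omega, Or.inr (by unfold P; omega),
      by unfold d1; split_ifs <;> omega⟩

lemma desc2 : ∀ a, a < p + q + r → a ≠ p + 1 → ∃ b, b < p + q + r ∧ b ≠ a ∧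
    (P p q r a b ∨ P p q r b a) ∧ d2 p q r b + 1 = d2 p q r a := by
  intro a ha h0
  by_cases hA : a < p
  · by_cases ha0 : a = 0
    · exact ⟨p, by omega, by omega, Or.inr (by unfold P; omega),
        by unfold d2; split_ifs <;> omega⟩
    by_cases hL : a + 2 ≤ min (q - 2) (p + 2) + p - a
    · exact ⟨a - 1, by omega, by omega, Or.inr (by unfold P; omega),
        by unfold d2; split_ifs <;> omega⟩
    by_cases hy : a + 1 < p
    · exact ⟨a + 1, by omega, by omega, Or.inl (by unfold P; omega),
        by unfold d2; split_ifs <;> omega⟩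
    · exact ⟨p + q - 1, by omega, by omega, Or.inr (by unfold P; omega),
        by unfold d2; split_ifs <;> omega⟩
  by_cases hx : a = p
  · exact ⟨p + 1, by omega, by omega, Or.inl (by unfold P; omega),
      by unfold d2; split_ifs <;> omega⟩
  by_cases hB : a < p + q
  · by_cases hL : a - p - 1 ≤ p + q - 1 - a + (p + 2)
    · exact ⟨a - 1, by omega, by omega, Or.inr (by unfold P; omega),
        by unfold d2; split_ifs <;> omega⟩
    by_cases hy : a + 1 < p + q
    · exact ⟨a + 1, by omega, by omega, Or.inl (by unfold P; omega),
        by unfold d2; split_ifs <;> omega⟩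
    · exact ⟨p + q + r - 1, by omega, by omega, Or.inl (by unfold P; omega),
        by unfold d2; split_ifs <;> omega⟩
  by_cases hc : a = p + q
  · exact ⟨p, by omega, by omega, Or.inr (by unfold P; omega),
      by unfold d2; split_ifs <;> omega⟩
  by_cases hL : a - (p + q) + 2 ≤ p + q + r - a + min (q - 2) (p + 2)
  · exact ⟨a - 1, by omega, by omega, Or.inr (by unfold P; omega),
      by unfold d2; split_ifs <;> omega⟩
  · exact ⟨a + 1, by omega, by omega, Or.inl (by unfold P; omega),
      by unfold d2; split_ifs <;> omega⟩

lemma nbrs : ∀ a, a < p + q + r → ∃ b c, b < p + q + r ∧ c < p + q + r ∧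
    b ≠ c ∧ b ≠ a ∧ c ≠ a ∧
    (P p q r a b ∨ P p q r b a) ∧ (P p q r a c ∨ P p q r c a) := by
  intro a ha
  by_cases ha0 : a = 0
  · by_cases hp1 : p = 1
    · exact ⟨p, p + q - 1, by omega, by omega, by omega, by omega, by omega,
        Or.inr (by unfold P; omega), Or.inr (by unfold P; omega)⟩
    · exact ⟨1, p, by omega, by omega, by omega, by omega, by omega,
        Or.inl (by unfold P; omega), Or.inr (by unfold P; omega)⟩
  by_cases hA : a < p
  · by_cases h' : a + 1 < p
    · exact ⟨a - 1, a + 1, by omega, by omega, by omega, by omega, by omega,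
        Or.inr (by unfold P; omega), Or.inl (by unfold P; omega)⟩
    · exact ⟨a - 1, p + q - 1, by omega, by omega, by omega, by omega, by omega,
        Or.inr (by unfold P; omega), Or.inr (by unfold P; omega)⟩
  by_cases hx : a = p
  · exact ⟨0, p + 1, by omega, by omega, by omega, by omega, by omega,
      Or.inl (by unfold P; omega), Or.inl (by unfold P; omega)⟩
  by_cases hB : a < p + q
  · by_cases h' : a + 1 < p + q
    · exact ⟨a - 1, a + 1, by omega, by omega, by omega, by omega, by omega,
        Or.inr (by unfold P; omega), Or.inl (by unfold P; omega)⟩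
    · exact ⟨p + q - 2, p + q + r - 1, by omega, by omega, by omega, by omega,
        by omega, Or.inr (by unfold P; omega), Or.inl (by unfold P; omega)⟩
  by_cases hc : a = p + q
  · by_cases h' : a + 1 < p + q + r
    · exact ⟨p, a + 1, by omega, by omega, by omega, by omega, by omega,
        Or.inr (by unfold P; omega), Or.inl (by unfold P; omega)⟩
    · exact ⟨p, p + q - 1, by omega, by omega, by omega, by omega, by omega,
        Or.inr (by unfold P; omega), Or.inr (by unfold P; omega)⟩
  by_cases h' : a + 1 < p + q + r
  · exact ⟨a - 1, a + 1, by omega, by omega, by omega, by omega, by omega,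
      Or.inr (by unfold P; omega), Or.inl (by unfold P; omega)⟩
  · exact ⟨a - 1, p + q - 1, by omega, by omega, by omega, by omega, by omega,
      Or.inr (by unfold P; omega), Or.inr (by unfold P; omega)⟩

lemma inj (h4 : q ≠ r + 4) : ∀ a b, a < p + q + r → b < p + q + r →
    d1 p q r a = d1 p q r b → d2 p q r a = d2 p q r b → a = b := by
  intro a b ha hb e1 e2
  unfold d1 at e1; unfold d2 at e2
  split_ifs at e1 e2 <;> omega

end params

/-- generic: a function satisfying zero/Lipschitz/descent equals graph distance -/
lemma dist_eq_of {V : Type*} (G : SimpleGraph V) (w : V) (d : V → ℕ)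
    (h0 : ∀ u, d u = 0 ↔ u = w)
    (lip : ∀ u v, G.Adj u v → d u ≤ d v + 1)
    (desc : ∀ u, u ≠ w → ∃ v, G.Adj u v ∧ d v + 1 = d u) :
    ∀ u, G.dist u w = d u := by
  have key : ∀ n (u : V), d u ≤ n → ∃ Wk : G.Walk u w, Wk.length = d u := by
    intro n
    induction n with
    | zero =>
      intro u hu
      have hu0 : d u = 0 := Nat.le_zero.mp hu
      obtain rfl : u = w := (h0 u).mp hu0
      exact ⟨SimpleGraph.Walk.nil, by simp [hu0]⟩
    | succ n ih =>
      intro u hu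
      by_cases hz : d u = 0
      · obtain rfl : u = w := (h0 u).mp hz
        exact ⟨SimpleGraph.Walk.nil, by simp [hz]⟩
      · have he : u ≠ w := fun h => hz (h ▸ (h0 w).mpr rfl)
        obtain ⟨v, hadj, hv⟩ := desc u he
        obtain ⟨Wk, hWk⟩ := ih v (by omega)
        exact ⟨SimpleGraph.Walk.cons hadj Wk, by
          simp [SimpleGraph.Walk.length_cons, hWk]; omega⟩
  have hlb' : ∀ (x y : V) (Wk : G.Walk x y), d x ≤ Wk.length + d y := by
    intro x y Wk
    induction Wk with
    | nil => simp
    | cons h t ih =>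
      have := lip _ _ h
      simp only [SimpleGraph.Walk.length_cons]
      omega
  have hlb : ∀ (x : V) (Wk : G.Walk x w), d x ≤ Wk.length := by
    intro x Wk
    have := hlb' x w Wk
    have hw0 : d w = 0 := (h0 w).mpr rfl
    omega
  intro u
  obtain ⟨Wk, hWk⟩ := key (d u) u le_rfl
  have hub : G.dist u w ≤ d u := hWk ▸ SimpleGraph.dist_le Wk
  have hr : G.Reachable u w := ⟨Wk⟩
  obtain ⟨S, hS⟩ := hr.exists_walk_length_eq_dist
  have := hlb u S
  omega

end BicyclicAux

open BicyclicAux in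
theorem bicyclicIII_p_eq_r_diff_gt_two_ne_four (p q r : ℕ)
    (hp : 1 ≤ p) (hpr : p = r) (hqr : r < q) (h2 : r + 2 < q) (h4 : q ≠ r + 4) :
    IsResolving (bicyclicIII p q r)
      {(⟨0, by omega⟩ : Fin (p + q + r)), ⟨p + 1, by omega⟩}
    ∧ metricDim (bicyclicIII p q r) = 2 := by
  set G := bicyclicIII p q r with hG
  have hn : p + q + r > p + 1 := by omega
  set w1 : Fin (p + q + r) := ⟨0, by omega⟩ with hw1
  set w2 : Fin (p + q + r) := ⟨p + 1, by omega⟩ with hw2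
  -- distance formulas
  have hd1 : ∀ u : Fin (p + q + r), G.dist u w1 = d1 p q r u.val := by
    apply dist_eq_of
    · intro u
      rw [d1_zero hp hpr h2 u.val u.isLt]
      exact ⟨fun h => Fin.ext h, fun h => congrArg Fin.val h⟩
    · intro u v hadj
      rw [adj_iff_s18] at hadj
      rcases hadj.2 with h | h
      · exact (lip1 hp hpr h2 u.val v.val u.isLt v.isLt h).1
      · exact (lip1 hp hpr h2 v.val u.val v.isLt u.isLt h).2
    · intro u hne
      obtain ⟨b, hb, hba, hrel, heq⟩ := desc1 hp hpr h2 u.val u.isLt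
        (fun h => hne (Fin.ext h))
      refine ⟨⟨b, hb⟩, (adj_iff_s18 p q r u ⟨b, hb⟩).mpr ⟨?_, ?_⟩, heq⟩
      · intro h; exact hba (congrArg Fin.val h).symm
      · exact hrel
  have hd2 : ∀ u : Fin (p + q + r), G.dist u w2 = d2 p q r u.val := by
    apply dist_eq_of
    · intro u
      rw [d2_zero hp hpr h2 u.val u.isLt]
      exact ⟨fun h => Fin.ext h, fun h => congrArg Fin.val h⟩
    · intro u v hadj
      rw [adj_iff_s18] at hadj
      rcases hadj.2 with h | h
      · exact (lip2 hp hpr h2 u.val v.val u.isLt v.isLt h).1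
      · exact (lip2 hp hpr h2 v.val u.val v.isLt u.isLt h).2
    · intro u hne
      obtain ⟨b, hb, hba, hrel, heq⟩ := desc2 hp hpr h2 u.val u.isLt
        (fun h => hne (Fin.ext h))
      refine ⟨⟨b, hb⟩, (adj_iff_s18 p q r u ⟨b, hb⟩).mpr ⟨?_, ?_⟩, heq⟩
      · intro h; exact hba (congrArg Fin.val h).symm
      · exact hrel
  have hres : IsResolving G {w1, w2} := by
    intro u v h
    have e1 := h w1 (Set.mem_insert _ _)
    have e2 := h w2 (Set.mem_insert_of_mem _ rfl)
    rw [hd1 u, hd1 v] at e1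
    rw [hd2 u, hd2 v] at e2
    exact Fin.ext (inj hp hpr h2 h4 u.val v.val u.isLt v.isLt e1 e2)
  refine ⟨hres, ?_⟩
  have hW : ((({w1, w2} : Finset (Fin (p + q + r)))) : Set (Fin (p + q + r)))
      = {w1, w2} := by simp
  have hne12 : w1 ≠ w2 := by
    rw [hw1, hw2]
    simp only [ne_eq, Fin.mk.injEq]
    omega
  have h2mem : 2 ∈ {n | ∃ W : Finset (Fin (p + q + r)),
      IsResolving G (↑W) ∧ W.card = n} := by
    refine ⟨{w1, w2}, by rw [hW]; exact hres, ?_⟩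
    rw [Finset.card_insert_of_notMem (by simpa using hne12), Finset.card_singleton]
  have hge : ∀ m ∈ {n | ∃ W : Finset (Fin (p + q + r)),
      IsResolving G (↑W) ∧ W.card = n}, 2 ≤ m := by
    rintro m ⟨W, hWres, hWcard⟩
    by_contra hlt
    interval_cases m
    · -- empty resolving set
      rw [Finset.card_eq_zero] at hWcard
      subst hWcard
      have : (⟨0, by omega⟩ : Fin (p + q + r)) = ⟨1, by omega⟩ := by
        apply hWres
        intro w hw
        simp at hw
      have := congrArg Fin.val this
      simp at this
    · -- singleton resolving set
      rw [Finset.card_eq_one] at hWcard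
      obtain ⟨w, rfl⟩ := hWcard
      obtain ⟨b, c, hb, hc, hbc, hbw, hcw, hrelb, hrelc⟩ :=
        nbrs hp hpr h2 w.val w.isLt
      have hadjb : G.Adj w ⟨b, hb⟩ := (adj_iff_s18 p q r w ⟨b, hb⟩).mpr
        ⟨fun h => hbw (congrArg Fin.val h).symm, hrelb⟩
      have hadjc : G.Adj w ⟨c, hc⟩ := (adj_iff_s18 p q r w ⟨c, hc⟩).mpr
        ⟨fun h => hcw (congrArg Fin.val h).symm, hrelc⟩
      have : (⟨b, hb⟩ : Fin (p + q + r)) = ⟨c, hc⟩ := by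
        apply hWres
        intro w' hw'
        have hw'w : w' = w := by simpa using hw'
        subst hw'w
        rw [SimpleGraph.dist_eq_one_iff_adj.mpr hadjb.symm,
          SimpleGraph.dist_eq_one_iff_adj.mpr hadjc.symm]
      exact hbc (congrArg Fin.val this)
  exact le_antisymm (Nat.sInf_le h2mem) (le_csInf ⟨2, h2mem⟩ hge)
end
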